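/- arXiv:1610.07497 — 9 statements merged into one kernel-verified Lean document; each statement's English description precedes it below -/
import Mathlib

section
/- Fix d ≥ 2. Let f̃(x) = x·log^{d−1} x + x·p(log x) + β, where p is a real polynomial of degree at most d−2 and β ∈ ℝ, and let g̃ be the inverse function of f̃ defined for all sufficiently large positive x. With h_d(x) = x / log^{d−1}(x+1), we have g̃(x)/h_d(x) → 1 as x → ∞. -/
open Filter

private lemma stmt3_auxA (d : ℕ) (hd : 2 ≤ d) (p : Polynomial ℝ) (hp : p.natDegree ≤ d - 2)
    (β : ℝ) (f : ℝ → ℝ)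
    (hf : ∀ x : ℝ, f x = x * Real.log x ^ (d - 1) + x * p.eval (Real.log x) + β) :
    Tendsto (fun x : ℝ => f x / (x * Real.log x ^ (d - 1))) atTop (nhds 1) := by
  have hxl : Tendsto (fun x : ℝ => x * Real.log x ^ (d - 1)) atTop atTop :=
    tendsto_id.atTop_mul_atTop₀
      ((tendsto_pow_atTop (by omega)).comp Real.tendsto_log_atTop)
  have hdeg : p.degree < (Polynomial.X ^ (d - 1) : Polynomial ℝ).degree := by
    rw [Polynomial.degree_X_pow]
    refine lt_of_le_of_lt Polynomial.degree_le_natDegree ?_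
    exact_mod_cast (by omega : p.natDegree < d - 1)
  have h1 : Tendsto (fun x : ℝ => p.eval (Real.log x) / Real.log x ^ (d - 1)) atTop (nhds 0) := by
    have := (Polynomial.div_tendsto_zero_of_degree_lt p (Polynomial.X ^ (d - 1)) hdeg).comp
      Real.tendsto_log_atTop
    simpa [Function.comp_def] using this
  have h2 : Tendsto (fun x : ℝ => β / (x * Real.log x ^ (d - 1))) atTop (nhds 0) :=
    tendsto_const_nhds.div_atTop hxl
  have h3 : Tendsto (fun x : ℝ =>
      1 + p.eval (Real.log x) / Real.log x ^ (d - 1) + β / (x * Real.log x ^ (d - 1)))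
      atTop (nhds 1) := by
    have := (((tendsto_const_nhds : Tendsto (fun _ : ℝ => (1:ℝ)) atTop (nhds 1)).add h1).add h2)
    simpa using this
  refine h3.congr' ?_
  filter_upwards [eventually_gt_atTop 1] with x hx
  have hx0 : (0 : ℝ) < x := by linarith
  have hl : 0 < Real.log x := Real.log_pos hx
  rw [hf]
  field_simp

private lemma stmt3_auxB (d : ℕ) (hd : 2 ≤ d) (f : ℝ → ℝ)
    (hA : Tendsto (fun x : ℝ => f x / (x * Real.log x ^ (d - 1))) atTop (nhds 1)) :
    Tendsto (fun x : ℝ => Real.log (f x + 1) / Real.log x) atTop (nhds 1) := by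
  have hbounds : ∀ᶠ x : ℝ in atTop,
      1 ≤ (f x + 1) / x ∧ (f x + 1) / x ≤ Real.log x ^ d ∧ 0 < x ∧ 0 < Real.log x := by
    filter_upwards [hA.eventually (eventually_ge_nhds (by norm_num : (1:ℝ)/2 < 1)),
      hA.eventually (eventually_le_nhds (by norm_num : (1:ℝ) < 2)),
      Real.tendsto_log_atTop.eventually_ge_atTop 3, eventually_gt_atTop 1] with x h1 h2 h3 hx1
    have hx0 : (0:ℝ) < x := by linarith
    have hl : (0:ℝ) < Real.log x := by linarith
    have hL2 : (3:ℝ) ≤ Real.log x ^ (d-1) := by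
      calc (3:ℝ) ≤ 3 ^ (d-1) := le_self_pow₀ (by norm_num) (by omega)
        _ ≤ _ := pow_le_pow_left₀ (by norm_num) h3 _
    have hxl0 : (0:ℝ) < x * Real.log x ^ (d-1) := by positivity
    rw [le_div_iff₀ hxl0] at h1
    rw [div_le_iff₀ hxl0] at h2
    refine ⟨?_, ?_, hx0, hl⟩
    · rw [le_div_iff₀ hx0]; nlinarith
    · rw [div_le_iff₀ hx0]
      have hdd : Real.log x ^ d = Real.log x ^ (d-1) * Real.log x := by
        rw [← pow_succ]; congr 1; omega
      nlinarith
  have key : Tendsto (fun x : ℝ => Real.log ((f x + 1) / x) / Real.log x) atTop (nhds 0) := by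
    have hlog2 : Tendsto (fun x : ℝ => (d:ℝ) * Real.log (Real.log x) / Real.log x)
        atTop (nhds 0) := by
      have h := ((Real.isLittleO_log_id_atTop.comp_tendsto
        Real.tendsto_log_atTop).tendsto_div_nhds_zero).const_mul (d:ℝ)
      simpa [Function.comp, mul_div_assoc] using h
    refine tendsto_of_tendsto_of_tendsto_of_le_of_le' tendsto_const_nhds hlog2 ?_ ?_
    · filter_upwards [hbounds] with x hx
      obtain ⟨h1, -, -, hl⟩ := hx
      exact div_nonneg (Real.log_nonneg h1) hl.le
    · filter_upwards [hbounds] with x hx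
      obtain ⟨h1, h2, hx0, hl⟩ := hx
      have hlog : Real.log ((f x + 1) / x) ≤ (d:ℝ) * Real.log (Real.log x) := by
        rw [← Real.log_pow]
        apply Real.log_le_log (by linarith) h2
      exact div_le_div_of_nonneg_right hlog hl.le -- may need rename
  have h1' : Tendsto (fun x : ℝ => 1 + Real.log ((f x + 1) / x) / Real.log x) atTop (nhds 1) := by
    simpa using tendsto_const_nhds.add key
  refine h1'.congr' ?_
  filter_upwards [hbounds] with x hx
  obtain ⟨h1, -, hx0, hl⟩ := hx
  have hfx1 : (0:ℝ) < f x + 1 := by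
    have := (le_div_iff₀ hx0).mp h1; linarith
  rw [Real.log_div (ne_of_gt hfx1) (ne_of_gt hx0)]
  field_simp
  ring

private lemma stmt3_auxD (d : ℕ) (hd : 2 ≤ d) (p : Polynomial ℝ)
    (β : ℝ) (f g : ℝ → ℝ)
    (hf : ∀ x : ℝ, f x = x * Real.log x ^ (d - 1) + x * p.eval (Real.log x) + β)
    (hgf : ∀ᶠ x in atTop, g (f x) = x)
    (hA : Tendsto (fun x : ℝ => f x / (x * Real.log x ^ (d - 1))) atTop (nhds 1)) :
    Tendsto g atTop atTop := by
  have hftop : Tendsto f atTop atTop := by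
    have hxl : Tendsto (fun x : ℝ => (1/2) * (x * Real.log x ^ (d-1))) atTop atTop :=
      (tendsto_id.atTop_mul_atTop₀
        ((tendsto_pow_atTop (by omega)).comp Real.tendsto_log_atTop)).const_mul_atTop
        (by norm_num)
    refine tendsto_atTop_mono' _ ?_ hxl
    filter_upwards [hA.eventually (eventually_ge_nhds (by norm_num : (1:ℝ)/2 < 1)),
      eventually_gt_atTop 1] with x h1 hx1
    have hl : (0:ℝ) < Real.log x := Real.log_pos hx1
    have hxl0 : (0:ℝ) < x * Real.log x ^ (d-1) := by positivity
    rw [le_div_iff₀ hxl0] at h1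
    linarith
  rw [tendsto_atTop]
  intro b
  obtain ⟨a, ha⟩ := eventually_atTop.mp hgf
  set x₀ := max a (max b 2) with hx₀def
  have hcont : ∀ c : ℝ, ContinuousOn f (Set.Icc x₀ c) := by
    intro c
    have hfun : f = fun x => x * Real.log x ^ (d - 1) + x * p.eval (Real.log x) + β :=
      funext hf
    rw [hfun]
    have hlog : ContinuousOn Real.log (Set.Icc x₀ c) := by
      apply Real.continuousOn_log.mono
      intro x hx
      have h2x : (2:ℝ) ≤ x := le_trans (le_max_of_le_right (le_max_right _ _)) hx.1
      simp only [Set.mem_compl_iff, Set.mem_singleton_iff]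
      intro h; rw [h] at h2x; norm_num at h2x
    exact ((continuousOn_id.mul (hlog.pow _)).add
      (continuousOn_id.mul (p.continuous.comp_continuousOn hlog))).add continuousOn_const
  filter_upwards [eventually_ge_atTop (f x₀)] with y hy2
  obtain ⟨c, hc1, hc2⟩ := ((tendsto_atTop.mp hftop y).and (eventually_ge_atTop x₀)).exists
  obtain ⟨x, hx, hfx⟩ := intermediate_value_Icc hc2 (hcont c) ⟨hy2, hc1⟩
  have hxa : a ≤ x := le_trans (le_max_left _ _) hx.1
  have hgy : g y = x := by rw [← hfx]; exact ha x hxa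
  rw [hgy]
  exact le_trans (le_max_of_le_right (le_max_left _ _)) hx.1

/-- If `g̃` is the inverse (for large arguments) of
`f̃(x) = x log^{d-1} x + x p(log x) + β` where `deg p ≤ d-2`, then
`g̃(x)/h_d(x) → 1` as `x → ∞`, where `h_d(x) = x / log^{d-1}(x+1)`. -/
theorem stmt3 (d : ℕ) (hd : 2 ≤ d) (p : Polynomial ℝ) (hp : p.natDegree ≤ d - 2)
    (β : ℝ) (f g : ℝ → ℝ)
    (hf : ∀ x : ℝ, f x = x * Real.log x ^ (d - 1) + x * p.eval (Real.log x) + β)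
    (hgf : ∀ᶠ x in atTop, g (f x) = x)
    (hfg : ∀ᶠ y in atTop, f (g y) = y) :
    Tendsto (fun x : ℝ => g x / (x / Real.log (x + 1) ^ (d - 1))) atTop (nhds 1) := by
  have hA := stmt3_auxA d hd p hp β f hf
  have hB := stmt3_auxB d hd f hA
  have hD := stmt3_auxD d hd p β f g hf hgf hA
  have hAinv : Tendsto (fun x : ℝ => x * Real.log x ^ (d-1) / f x) atTop (nhds 1) := by
    have := hA.inv₀ one_ne_zero
    simpa [inv_div] using this
  have hC : Tendsto (fun x : ℝ => x * Real.log (f x + 1) ^ (d-1) / f x) atTop (nhds 1) := by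
    have hprod := (hB.pow (d-1)).mul hAinv
    rw [one_pow, one_mul] at hprod
    refine hprod.congr' ?_
    filter_upwards [Real.tendsto_log_atTop.eventually_gt_atTop 0] with x hl
    have hB0 : Real.log x ^ (d-1) ≠ 0 := pow_ne_zero _ hl.ne'
    rw [div_pow, div_mul_div_comm,
      show Real.log (f x + 1) ^ (d-1) * (x * Real.log x ^ (d-1))
        = Real.log x ^ (d-1) * (x * Real.log (f x + 1) ^ (d-1)) by ring,
      mul_div_mul_left _ _ hB0]
  have hcomp := hC.comp hD
  refine hcomp.congr' ?_
  filter_upwards [hfg] with y hy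
  simp only [Function.comp]
  rw [hy, div_div_eq_mul_div]
end

section
/- Fix integers 1 ≤ r ≤ d−1. Define S_{d,r}(n) = #{m ∈ ℤ^d : H_{d,r}(m) ≤ n}, where H_{d,r}(m) is the maximum over all choices of r distinct indices i₁ < … < i_r of ∏_{j=1}^r max(|m_{i_j}|, 1). Then there exists a constant C > 0 such that n^{d/r} ≤ S_{d,r}(n) ≤ C·n^{d/r} for all n ∈ ℕ. -/
/-- `H_{d,r}(m)`: the maximum over all `r`-element subsets `s ⊆ {1,…,d}` of
`∏_{i ∈ s} max(|m_i|, 1)`. -/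
def Hdr (d r : ℕ) (m : Fin d → ℤ) : ℕ :=
  ((Finset.univ : Finset (Fin d)).powersetCard r).sup fun s => ∏ i ∈ s, max (m i).natAbs 1

set_option maxHeartbeats 1000000

open Finset Real



lemma sum_shift_aux (f : ℕ → ℝ) (t M : ℕ) :
    ∑ s ∈ Finset.Icc (t+1) M, f s = ∑ i ∈ Finset.Ico t M, f (i + 1) := by
  rw [← Finset.Ico_add_one_right_eq_Icc, Finset.sum_Ico_eq_sum_range, Finset.sum_Ico_eq_sum_range]
  have : M + 1 - (t + 1) = M - t := by omega
  rw [this]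
  exact Finset.sum_congr rfl (fun i _ => by ring_nf)

/-- Sum of `s^b` over `s ∈ [t, M]`, for `b < -1`. -/
lemma sum_rpow_tail (b : ℝ) (hb : b < -1) (t M : ℕ) (ht : 1 ≤ t) :
    ∑ s ∈ Finset.Icc t M, (s : ℝ) ^ b ≤ (1 + 1 / (-b - 1)) * (t : ℝ) ^ (b + 1) := by
  have hb0 : -b - 1 > 0 := by linarith
  have htR : (1 : ℝ) ≤ (t : ℝ) := by exact_mod_cast ht
  have htpos : (0 : ℝ) < t := by linarith
  have hrpos : (0 : ℝ) ≤ (t : ℝ) ^ (b + 1) := Real.rpow_nonneg (le_of_lt htpos) _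
  rcases le_or_gt t M with hle | hlt
  · have hanti : AntitoneOn (fun x : ℝ => x ^ b) (Set.Icc (t : ℝ) (M : ℝ)) := by
      intro x hx y hy hxy
      exact Real.rpow_le_rpow_of_nonpos (lt_of_lt_of_le htpos hx.1) hxy (by linarith)
    have hint := AntitoneOn.sum_le_integral_Ico (Nat.cast_le.mpr hle) hanti
    have hIcc : Finset.Icc t M = insert t (Finset.Icc (t+1) M) := by
      rw [Finset.Icc_add_one_left_eq_Ioc, Finset.Icc_eq_cons_Ioc hle, Finset.cons_eq_insert]
    rw [hIcc, Finset.sum_insert (by simp), sum_shift_aux (fun s => (s:ℝ)^b) t M]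
    have hIval : ∫ x in (t:ℝ)..(M:ℝ), x ^ b = ((M:ℝ) ^ (b+1) - (t:ℝ) ^ (b+1)) / (b+1) := by
      apply integral_rpow
      right
      constructor
      · linarith
      · intro hmem
        rw [Set.uIcc_of_le (by exact_mod_cast hle)] at hmem
        have := hmem.1
        linarith
    have hMpos : (0:ℝ) ≤ (M:ℝ) ^ (b+1) := Real.rpow_nonneg (by positivity) _
    have htb : (t:ℝ) ^ b ≤ (t:ℝ) ^ (b+1) :=
      Real.rpow_le_rpow_of_exponent_le htR (by linarith)
    have : ((M:ℝ) ^ (b+1) - (t:ℝ) ^ (b+1)) / (b+1) ≤ (t:ℝ) ^ (b+1) / (-b-1) := by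
      have heq : ((M:ℝ) ^ (b+1) - (t:ℝ) ^ (b+1)) / (b+1)
          = ((t:ℝ) ^ (b+1) - (M:ℝ) ^ (b+1)) / (-b-1) := by
        rw [div_eq_div_iff (by linarith) (by linarith)]
        ring
      rw [heq]
      gcongr
      linarith
    calc (t:ℝ) ^ b + ∑ i ∈ Finset.Ico t M, ((i+1 : ℕ) : ℝ) ^ b
        ≤ (t:ℝ) ^ b + ∫ x in (t:ℝ)..(M:ℝ), x ^ b := by
          exact add_le_add_right hint _
      _ ≤ (t:ℝ) ^ (b+1) + (t:ℝ) ^ (b+1) / (-b-1) := by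
          rw [hIval]; exact add_le_add htb this
      _ = (1 + 1 / (-b - 1)) * (t : ℝ) ^ (b + 1) := by ring
  · rw [Finset.Icc_eq_empty (by omega)]
    simp only [Finset.sum_empty]
    positivity

/-- Sum of `t^b` over `t ∈ [1, K]`, for `b > -1`. -/
lemma sum_rpow_head (b : ℝ) (hb : -1 < b) (K : ℕ) (hK : 1 ≤ K) :
    ∑ t ∈ Finset.Icc 1 K, (t : ℝ) ^ b ≤ (1 + 1 / (b + 1)) * (K : ℝ) ^ (b + 1) := by
  have hb0 : (0:ℝ) < b + 1 := by linarith
  have hKR : (1 : ℝ) ≤ (K : ℝ) := by exact_mod_cast hK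
  have hK1 : (1:ℝ) ≤ (K : ℝ) ^ (b + 1) := Real.one_le_rpow hKR (le_of_lt hb0)
  rcases le_or_gt 0 b with hbpos | hbneg
  · -- each term ≤ K^b, K terms
    have : ∑ t ∈ Finset.Icc 1 K, (t : ℝ) ^ b ≤ ∑ t ∈ Finset.Icc 1 K, (K : ℝ) ^ b := by
      apply Finset.sum_le_sum
      intro t htm
      have := (Finset.mem_Icc.mp htm).2
      exact Real.rpow_le_rpow (by positivity) (by exact_mod_cast this) hbpos
    rw [Finset.sum_const, Nat.card_Icc] at this
    have hcard : ((K + 1 - 1) : ℕ) = K := by omega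
    rw [hcard] at this
    calc ∑ t ∈ Finset.Icc 1 K, (t : ℝ) ^ b ≤ K • (K : ℝ) ^ b := this
      _ = (K:ℝ) ^ (1:ℝ) * (K:ℝ) ^ b := by
          rw [nsmul_eq_mul, Real.rpow_one]
      _ = (K:ℝ) ^ (b+1) := by
          rw [← Real.rpow_add (by positivity)]; ring_nf
      _ ≤ (1 + 1 / (b + 1)) * (K : ℝ) ^ (b + 1) := by
          have h1 : (0:ℝ) < 1 / (b+1) := by positivity
          nlinarith
  · -- antitone case, compare with integral
    have hanti : AntitoneOn (fun x : ℝ => x ^ b) (Set.Icc (1 : ℝ) (K : ℝ)) := by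
      intro x hx y hy hxy
      exact Real.rpow_le_rpow_of_nonpos (lt_of_lt_of_le one_pos hx.1) hxy (le_of_lt hbneg)
    have hint := AntitoneOn.sum_le_integral_Ico (a := 1) (Nat.cast_le.mpr hK) (by exact_mod_cast hanti)
    have hIcc : Finset.Icc 1 K = insert 1 (Finset.Icc 2 K) := by
      rw [Finset.Icc_eq_cons_Ioc hK, Finset.cons_eq_insert, ← Finset.Icc_add_one_left_eq_Ioc]
      rfl
    rw [hIcc, Finset.sum_insert (by simp), sum_shift_aux (fun s => (s:ℝ)^b) 1 K]
    have hIval : ∫ x in (1:ℝ)..(K:ℝ), x ^ b = ((K:ℝ) ^ (b+1) - (1:ℝ) ^ (b+1)) / (b+1) :=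
      integral_rpow (Or.inl hb)
    have : ∑ i ∈ Finset.Ico 1 K, ((i+1 : ℕ) : ℝ) ^ b ≤ ((K:ℝ) ^ (b+1) - 1) / (b+1) := by
      calc ∑ i ∈ Finset.Ico 1 K, ((i+1 : ℕ) : ℝ) ^ b ≤ ∫ x in ((1:ℕ):ℝ)..(K:ℝ), x ^ b := hint
        _ = ((K:ℝ) ^ (b+1) - 1) / (b+1) := by rw [Nat.cast_one, hIval, Real.one_rpow]
    have hfin : ((K:ℝ) ^ (b+1) - 1) / (b+1) ≤ (K:ℝ) ^ (b+1) / (b+1) := by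
      gcongr
      linarith
    calc ((1:ℕ):ℝ) ^ b + ∑ i ∈ Finset.Ico 1 K, ((i+1 : ℕ) : ℝ) ^ b
        ≤ 1 + (K:ℝ) ^ (b+1) / (b+1) := by
          rw [Nat.cast_one, Real.one_rpow]
          exact add_le_add_right (this.trans hfin) _
      _ ≤ (K:ℝ) ^ (b+1) + (K:ℝ) ^ (b+1) / (b+1) := by linarith
      _ = (1 + 1 / (b + 1)) * (K : ℝ) ^ (b + 1) := by ring


/-- Monotone tuples with entries in `[t, M]` and product at most `M`. -/
def Qset (k t M : ℕ) : Finset (Fin k → ℕ) :=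
  (Fintype.piFinset fun _ => Finset.Icc t M).filter
    (fun N => Monotone N ∧ ∏ i, N i ≤ M)

lemma Qset_mem {k t M : ℕ} (ht : 1 ≤ t) (N : Fin k → ℕ) :
    N ∈ Qset k t M ↔ (∀ i, t ≤ N i) ∧ Monotone N ∧ ∏ i, N i ≤ M := by
  simp only [Qset, Finset.mem_filter, Fintype.mem_piFinset, Finset.mem_Icc]
  constructor
  · rintro ⟨h1, h2, h3⟩
    exact ⟨fun i => (h1 i).1, h2, h3⟩
  · rintro ⟨h1, h2, h3⟩
    refine ⟨fun i => ⟨h1 i, ?_⟩, h2, h3⟩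
    calc N i ≤ ∏ j, N j := by
          exact Finset.single_le_prod' (fun j _ => le_trans ht (h1 j)) (Finset.mem_univ i)
      _ ≤ M := h3

lemma Qset_card (q : ℝ) (hq : 1 < q) (k : ℕ) :
    ∃ C > (0:ℝ), ∀ t M : ℕ, 1 ≤ t →
      ((Qset k t M).card : ℝ) ≤ C * (M:ℝ) ^ q * (t:ℝ) ^ (-((k:ℝ) * (q-1))) := by
  induction k with
  | zero =>
    refine ⟨1, one_pos, fun t M ht => ?_⟩
    simp only [Nat.cast_zero, zero_mul, neg_zero, Real.rpow_zero, mul_one, one_mul]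
    rcases Nat.eq_zero_or_pos M with hM | hM
    · subst hM
      have : (Qset 0 t 0).card = 0 := by
        rw [Finset.card_eq_zero, Finset.eq_empty_iff_forall_notMem]
        intro N hN
        have := ((Qset_mem ht N).mp hN).2.2
        simp at this
      rw [this]
      simpa using Real.rpow_nonneg le_rfl q
    · have h1 : ((Qset 0 t M).card : ℝ) ≤ 1 := by
        have : (Qset 0 t M).card ≤ 1 := Finset.card_le_one.mpr
          (fun a _ b _ => funext fun i => i.elim0)
        exact_mod_cast this
      have h2 : (1:ℝ) ≤ (M:ℝ) ^ q :=
        Real.one_le_rpow (by exact_mod_cast hM) (by linarith)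
      linarith
  | succ k ih =>
    obtain ⟨C, hC, hbound⟩ := ih
    obtain ⟨p, hp⟩ : ∃ p : ℝ, p = q + k * (q - 1) := ⟨_, rfl⟩
    have hq1 : (0:ℝ) < q - 1 := by linarith
    have hknn : (0:ℝ) ≤ (k:ℝ) := Nat.cast_nonneg k
    have hp1 : 1 < p := by
      have : (0:ℝ) ≤ (k:ℝ) * (q-1) := by positivity
      rw [hp]; linarith
    have hppos : (0:ℝ) < 1 + 1 / (p - 1) := by
      have := one_div_pos.mpr (show (0:ℝ) < p - 1 by linarith)
      linarith
    refine ⟨C * (1 + 1 / (p - 1)), mul_pos hC hppos, fun t M ht => ?_⟩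
    have htpos : (0:ℝ) < (t:ℝ) := by exact_mod_cast ht
    -- injection into a sigma set
    have hcard : (Qset (k+1) t M).card ≤ ∑ s ∈ Finset.Icc t M, (Qset k s (M/s)).card := by
      rw [← Finset.card_sigma]
      apply Finset.card_le_card_of_injOn (fun N => ⟨N 0, Fin.tail N⟩)
      · intro N hN
        obtain ⟨h1, h2, h3⟩ := (Qset_mem ht N).mp hN
        have hts : t ≤ N 0 := h1 0
        have hs1 : 1 ≤ N 0 := le_trans ht hts
        have hprodsplit : N 0 * ∏ i, Fin.tail N i = ∏ i, N i := (Fin.prod_univ_succ N).symm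
        have hsM : N 0 ≤ M := by
          calc N 0 ≤ ∏ j, N j := Finset.single_le_prod'
                (fun j _ => le_trans ht (h1 j)) (Finset.mem_univ 0)
            _ ≤ M := h3
        simp only [Finset.mem_coe, Finset.mem_sigma]
        refine ⟨Finset.mem_Icc.mpr ⟨hts, hsM⟩, ?_⟩
        rw [Qset_mem hs1]
        refine ⟨fun i => h2 (Fin.zero_le i.succ), fun i j hij => h2 ?_, ?_⟩
        · exact Fin.succ_le_succ_iff.mpr hij
        · have h4 : (∏ i, Fin.tail N i) * N 0 ≤ M := by
            rw [mul_comm, hprodsplit]; exact h3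
          exact (Nat.le_div_iff_mul_le hs1).mpr h4
      · intro N _ N' _ hNN'
        simp only [Sigma.ext_iff, heq_eq_eq] at hNN'
        rw [← Fin.cons_self_tail N, ← Fin.cons_self_tail N', hNN'.1, hNN'.2]
    have hMnn : (0:ℝ) ≤ (M:ℝ) := Nat.cast_nonneg M
    have hterm : ∀ s ∈ Finset.Icc t M,
        ((Qset k s (M/s)).card : ℝ) ≤ C * (M:ℝ) ^ q * (s:ℝ) ^ (-p) := by
      intro s hsmem
      obtain ⟨hts, hsM⟩ := Finset.mem_Icc.mp hsmem
      have hs1 : 1 ≤ s := le_trans ht hts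
      have hspos : (0:ℝ) < (s:ℝ) := by exact_mod_cast hs1
      calc ((Qset k s (M/s)).card : ℝ)
          ≤ C * ((M/s : ℕ):ℝ) ^ q * (s:ℝ) ^ (-((k:ℝ) * (q-1))) := hbound s (M/s) hs1
        _ ≤ C * ((M:ℝ)/(s:ℝ)) ^ q * (s:ℝ) ^ (-((k:ℝ) * (q-1))) := by
            have h1 : ((M/s : ℕ):ℝ) ≤ (M:ℝ)/(s:ℝ) := Nat.cast_div_le
            have h2 : ((M/s : ℕ):ℝ) ^ q ≤ ((M:ℝ)/(s:ℝ)) ^ q :=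
              Real.rpow_le_rpow (Nat.cast_nonneg _) h1 (by linarith)
            have h3 : (0:ℝ) ≤ (s:ℝ) ^ (-((k:ℝ) * (q-1))) := Real.rpow_nonneg hspos.le _
            exact mul_le_mul_of_nonneg_right (mul_le_mul_of_nonneg_left h2 hC.le) h3
        _ = C * (M:ℝ) ^ q * (s:ℝ) ^ (-p) := by
            rw [Real.div_rpow hMnn hspos.le, div_eq_mul_inv, ← Real.rpow_neg hspos.le,
              mul_assoc, mul_assoc, ← Real.rpow_add hspos, hp]
            ring_nf
    calc ((Qset (k+1) t M).card : ℝ)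
        ≤ ∑ s ∈ Finset.Icc t M, ((Qset k s (M/s)).card : ℝ) := by exact_mod_cast hcard
      _ ≤ ∑ s ∈ Finset.Icc t M, C * (M:ℝ) ^ q * (s:ℝ) ^ (-p) := Finset.sum_le_sum hterm
      _ = C * (M:ℝ) ^ q * ∑ s ∈ Finset.Icc t M, (s:ℝ) ^ (-p) := by
          rw [Finset.mul_sum]
      _ ≤ C * (M:ℝ) ^ q * ((1 + 1 / (-(-p) - 1)) * (t:ℝ) ^ (-p + 1)) := by
          have hsum := sum_rpow_tail (-p) (by linarith) t M ht
          have : (0:ℝ) ≤ C * (M:ℝ) ^ q := by positivity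
          exact mul_le_mul_of_nonneg_left hsum this
      _ = C * (1 + 1 / (p - 1)) * (M:ℝ) ^ q * (t:ℝ) ^ (-(((k:ℕ)+1:ℝ) * (q-1))) := by
          have he : -p + 1 = -(((k:ℕ)+1:ℝ) * (q-1)) := by rw [hp]; ring
          have he2 : -(-p) - 1 = p - 1 := by ring
          rw [he, he2]; ring
      _ = C * (1 + 1 / (p - 1)) * (M:ℝ) ^ q * (t:ℝ) ^ (-((((k+1):ℕ):ℝ) * (q-1))) := by
          norm_num


def Gfun (d r : ℕ) (N : Fin d → ℕ) : ℕ :=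
  ((Finset.univ : Finset (Fin d)).powersetCard r).sup fun s => ∏ i ∈ s, N i

lemma Hdr_eq_Gfun (d r : ℕ) (m : Fin d → ℤ) :
    Hdr d r m = Gfun d r (fun i => max (m i).natAbs 1) := rfl

lemma prod_le_Gfun (d r : ℕ) (N : Fin d → ℕ) (s : Finset (Fin d)) (hs : s.card = r) :
    ∏ i ∈ s, N i ≤ Gfun d r N :=
  Finset.le_sup (f := fun s => ∏ i ∈ s, N i)
    (Finset.mem_powersetCard.mpr ⟨Finset.subset_univ s, hs⟩)

lemma Gfun_comp_perm_le (d r : ℕ) (N : Fin d → ℕ) (σ : Equiv.Perm (Fin d)) :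
    Gfun d r (N ∘ σ) ≤ Gfun d r N := by
  apply Finset.sup_le
  intro s hs
  obtain ⟨-, hcard⟩ := Finset.mem_powersetCard.mp hs
  have h1 : ∏ i ∈ s, N (σ i) = ∏ i ∈ s.image σ, N i :=
    (Finset.prod_image (fun x _ y _ h => σ.injective h)).symm
  have h2 : (s.image σ).card = r := by
    rw [Finset.card_image_of_injective _ σ.injective, hcard]
  exact h1 ▸ prod_le_Gfun d r N _ h2

lemma Gfun_comp_perm (d r : ℕ) (N : Fin d → ℕ) (σ : Equiv.Perm (Fin d)) :
    Gfun d r (N ∘ σ) = Gfun d r N := by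
  refine le_antisymm (Gfun_comp_perm_le d r N σ) ?_
  have : N = (N ∘ σ) ∘ σ.symm := by
    funext x; simp
  calc Gfun d r N = Gfun d r ((N ∘ σ) ∘ σ.symm) := by rw [← this]
    _ ≤ Gfun d r (N ∘ σ) := Gfun_comp_perm_le d r (N ∘ σ) σ.symm

lemma le_Gfun (d r : ℕ) (hr : 1 ≤ r) (hrd : r ≤ d) (N : Fin d → ℕ)
    (h1 : ∀ i, 1 ≤ N i) (i : Fin d) : N i ≤ Gfun d r N := by
  obtain ⟨u, hiu, -, hu⟩ := Finset.exists_subsuperset_card_eq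
    (Finset.subset_univ {i}) (by simpa using hr) (by simpa using hrd)
  calc N i ≤ ∏ j ∈ u, N j :=
        Finset.single_le_prod' (fun j _ => h1 j) (hiu (Finset.mem_singleton_self i))
    _ ≤ Gfun d r N := prod_le_Gfun d r N u hu

/-- The finset of lattice points with `Hdr ≤ n`. -/
noncomputable def Fbox (d r n : ℕ) : Finset (Fin d → ℤ) :=
  (Fintype.piFinset fun _ : Fin d => Finset.Icc (-(n:ℤ)) (n:ℤ)).filter
    (fun m => Hdr d r m ≤ n)

lemma mem_Fbox (d r n : ℕ) (hr : 1 ≤ r) (hrd : r ≤ d) (m : Fin d → ℤ) :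
    m ∈ Fbox d r n ↔ Hdr d r m ≤ n := by
  simp only [Fbox, Finset.mem_filter, Fintype.mem_piFinset, Finset.mem_Icc]
  constructor
  · exact fun h => h.2
  · intro h
    refine ⟨fun i => ?_, h⟩
    have h2 : (m i).natAbs ≤ n := by
      calc (m i).natAbs ≤ max (m i).natAbs 1 := le_max_left _ _
        _ ≤ Gfun d r (fun j => max (m j).natAbs 1) :=
            le_Gfun d r hr hrd (fun j => max (m j).natAbs 1) (fun j => le_max_right _ _) i
        _ = Hdr d r m := (Hdr_eq_Gfun d r m).symm
        _ ≤ n := h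
    have h3 : |m i| ≤ (n : ℤ) := by
      rw [Int.abs_eq_natAbs]
      exact_mod_cast h2
    exact abs_le.mp h3

lemma natCard_eq_Fbox_card (d r n : ℕ) (hr : 1 ≤ r) (hrd : r ≤ d) :
    Nat.card {m : Fin d → ℤ // Hdr d r m ≤ n} = (Fbox d r n).card := by
  rw [← Nat.card_eq_finsetCard]
  exact Nat.card_congr (Equiv.subtypeEquivRight
    (fun m => (mem_Fbox d r n hr hrd m).symm))

lemma lower_box (d r n k : ℕ) (hr : 1 ≤ r) (hrd : r ≤ d) (hk1 : 1 ≤ k) (hkn : k ≤ n)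
    (hkr : k ^ r ≤ n) :
    (2 * k + 1) ^ d ≤ (Fbox d r n).card := by
  have hsub : (Fintype.piFinset fun _ : Fin d => Finset.Icc (-(k:ℤ)) (k:ℤ)) ⊆ Fbox d r n := by
    intro m hm
    simp only [Fintype.mem_piFinset, Finset.mem_Icc] at hm
    have habs : ∀ i, (m i).natAbs ≤ k := by
      intro i
      have : |m i| ≤ (k : ℤ) := abs_le.mpr (hm i)
      rw [Int.abs_eq_natAbs] at this
      exact_mod_cast this
    rw [mem_Fbox d r n hr hrd]
    apply Finset.sup_le
    intro s hs
    obtain ⟨-, hcard⟩ := Finset.mem_powersetCard.mp hs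
    calc ∏ i ∈ s, max (m i).natAbs 1 ≤ ∏ i ∈ s, k :=
          Finset.prod_le_prod' (fun i _ => max_le (habs i) hk1)
      _ = k ^ r := by rw [Finset.prod_const, hcard]
      _ ≤ n := hkr
  calc (2 * k + 1) ^ d
      = (Fintype.piFinset fun _ : Fin d => Finset.Icc (-(k:ℤ)) (k:ℤ)).card := by
        rw [Fintype.card_piFinset]
        have : (Finset.Icc (-(k:ℤ)) (k:ℤ)).card = 2 * k + 1 := by
          rw [Int.card_Icc]
          omega
        simp [this]
    _ ≤ (Fbox d r n).card := Finset.card_le_card hsub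

section
variable (d r n : ℕ)

/-- tuples of naturals in `[1,n]` with `Gfun ≤ n`. -/
def Aset (d r n : ℕ) : Finset (Fin d → ℕ) :=
  (Fintype.piFinset fun _ : Fin d => Finset.Icc 1 n).filter
    (fun N => Gfun d r N ≤ n)

/-- monotone tuples of naturals in `[1,n]` with `Gfun ≤ n`. -/
def Mset (d r n : ℕ) : Finset (Fin d → ℕ) :=
  (Fintype.piFinset fun _ : Fin d => Finset.Icc 1 n).filter
    (fun N => Monotone N ∧ Gfun d r N ≤ n)

lemma Fbox_le_Aset (hn : 1 ≤ n) : (Fbox d r n).card ≤ 3 ^ d * (Aset d r n).card := by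
  classical
  set φ : (Fin d → ℤ) → (Fin d → ℕ) := fun m i => max (m i).natAbs 1 with hφ
  apply Finset.card_le_mul_card_image_of_maps_to (f := φ) (t := Aset d r n)
  · -- maps to
    intro m hm
    simp only [Fbox, Finset.mem_filter, Fintype.mem_piFinset, Finset.mem_Icc] at hm
    obtain ⟨h1, h2⟩ := hm
    simp only [Aset, Finset.mem_filter, Fintype.mem_piFinset, Finset.mem_Icc]
    constructor
    · intro i
      refine ⟨le_max_right _ _, max_le ?_ hn⟩
      have h3 : |m i| ≤ (n : ℤ) := abs_le.mpr (h1 i)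
      rw [Int.abs_eq_natAbs] at h3
      exact_mod_cast h3
    · rw [← Hdr_eq_Gfun]
      exact h2
  · -- fibers at most 3^d
    intro N _
    have hsub : (Fbox d r n).filter (fun m => φ m = N) ⊆
        Fintype.piFinset fun i => ({(N i : ℤ), -(N i : ℤ), 0} : Finset ℤ) := by
      intro m hm
      obtain ⟨-, hφm⟩ := Finset.mem_filter.mp hm
      simp only [Fintype.mem_piFinset, Finset.mem_insert, Finset.mem_singleton]
      intro i
      have hNi : max (m i).natAbs 1 = N i := congrFun hφm i
      rcases Nat.eq_zero_or_pos (m i).natAbs with h0 | h0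
      · right; right
        exact Int.natAbs_eq_zero.mp h0
      · have : max (m i).natAbs 1 = (m i).natAbs := max_eq_left h0
        rw [this] at hNi
        rcases Int.natAbs_eq (m i) with he | he
        · left; rw [he, hNi]
        · right; left; rw [he, hNi]
    calc ((Fbox d r n).filter (fun m => φ m = N)).card
        ≤ (Fintype.piFinset fun i => ({(N i : ℤ), -(N i : ℤ), 0} : Finset ℤ)).card :=
          Finset.card_le_card hsub
      _ = ∏ i : Fin d, ({(N i : ℤ), -(N i : ℤ), 0} : Finset ℤ).card := by
          rw [Fintype.card_piFinset]
      _ ≤ ∏ i : Fin d, 3 := by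
          apply Finset.prod_le_prod'
          intro i _
          calc ({(N i : ℤ), -(N i : ℤ), 0} : Finset ℤ).card
              ≤ ({-(N i : ℤ), 0} : Finset ℤ).card + 1 := Finset.card_insert_le _ _
            _ ≤ (({0} : Finset ℤ).card + 1) + 1 :=
                Nat.add_le_add_right (Finset.card_insert_le _ _) 1
            _ = 3 := by simp
      _ = 3 ^ d := by simp

lemma Aset_le_Mset : (Aset d r n).card ≤ Nat.factorial d * (Mset d r n).card := by
  classical
  set ψ : (Fin d → ℕ) → (Fin d → ℕ) := fun N => N ∘ Tuple.sort N with hψ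
  apply Finset.card_le_mul_card_image_of_maps_to (f := ψ) (t := Mset d r n)
  · intro N hN
    simp only [Aset, Finset.mem_filter, Fintype.mem_piFinset, Finset.mem_Icc] at hN
    obtain ⟨h1, h2⟩ := hN
    simp only [Mset, Finset.mem_filter, Fintype.mem_piFinset, Finset.mem_Icc]
    refine ⟨fun i => h1 _, Tuple.monotone_sort N, ?_⟩
    calc Gfun d r (N ∘ Tuple.sort N) = Gfun d r N := Gfun_comp_perm d r N _
      _ ≤ n := h2
  · intro P _
    calc ((Aset d r n).filter (fun N => ψ N = P)).card
        ≤ (Finset.univ : Finset (Equiv.Perm (Fin d))).card := by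
          apply Finset.card_le_card_of_injOn (fun N => Tuple.sort N)
            (fun _ _ => Finset.mem_univ _)
          intro N hN N' hN' hss
          simp only [Finset.coe_filter, Set.mem_setOf_eq] at hN hN'
          have e1 : N ∘ Tuple.sort N = P := hN.2
          have e2 : N' ∘ Tuple.sort N' = P := hN'.2
          funext i
          have : N (Tuple.sort N ((Tuple.sort N).symm i))
              = N' (Tuple.sort N' ((Tuple.sort N').symm i)) := by
            have c1 := congrFun e1 ((Tuple.sort N).symm i)
            have c2 := congrFun e2 ((Tuple.sort N').symm i)
            simp only [Function.comp_apply] at c1 c2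
            simp only [] at hss
            rw [c1, c2, hss]
          simpa using this
      _ = Nat.factorial d := by
          rw [Finset.card_univ, Fintype.card_perm, Fintype.card_fin]
end

section
variable (e r' n : ℕ)

lemma Mset_le_sum (he : 1 ≤ e) (hn : 1 ≤ n) :
    (Mset (e + (r'+1)) (r'+1) n).card ≤
      ∑ t ∈ (Finset.Icc 1 n).filter (fun t => t ^ (r'+1) ≤ n),
        t ^ e * (Qset r' t (n/t)).card := by
  classical
  set d := e + (r'+1) with hd
  have hi₀ : e < d := by omega
  set i₀ : Fin d := ⟨e, hi₀⟩ with hi₀def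
  have hemb1 : ∀ j : Fin e, j.1 < d := fun j => by omega
  have hemb2 : ∀ j : Fin r', e + 1 + j.1 < d := fun j => by omega
  set emb₁ : Fin e → Fin d := fun j => ⟨j.1, hemb1 j⟩ with hemb₁def
  set emb₂ : Fin r' → Fin d := fun j => ⟨e + 1 + j.1, hemb2 j⟩ with hemb₂def
  set T := ((Finset.Icc 1 n).filter (fun t => t ^ (r'+1) ≤ n)).sigma
      (fun t => (Fintype.piFinset fun _ : Fin e => Finset.Icc 1 t) ×ˢ Qset r' t (n/t))
    with hT
  have hcardT : T.card = ∑ t ∈ (Finset.Icc 1 n).filter (fun t => t ^ (r'+1) ≤ n),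
      t ^ e * (Qset r' t (n/t)).card := by
    rw [hT, Finset.card_sigma]
    apply Finset.sum_congr rfl
    intro t _
    rw [Finset.card_product, Fintype.card_piFinset]
    simp [Nat.card_Icc]
  rw [← hcardT]
  apply Finset.card_le_card_of_injOn
    (fun N => ⟨N i₀, (fun j => N (emb₁ j), fun j => N (emb₂ j))⟩)
  · -- maps to T
    intro N hN
    simp only [Finset.mem_coe, Mset, Finset.mem_filter, Fintype.mem_piFinset, Finset.mem_Icc] at hN
    obtain ⟨h1, hmono, hG⟩ := hN
    set t := N i₀ with htdef
    have ht1 : 1 ≤ t := (h1 i₀).1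
    -- the "top" index set
    have hinj2 : Function.Injective emb₂ := by
      intro a b hab
      simp only [hemb₂def, Fin.mk.injEq] at hab
      exact Fin.ext (by omega)
    have hnotmem : i₀ ∉ Finset.image emb₂ Finset.univ := by
      simp only [Finset.mem_image]
      rintro ⟨j, -, hj⟩
      simp only [hemb₂def, hi₀def, Fin.mk.injEq] at hj
      omega
    have hprod_u : t * ∏ j : Fin r', N (emb₂ j) ≤ n := by
      have hcardu : (insert i₀ (Finset.image emb₂ Finset.univ)).card = r' + 1 := by
        rw [Finset.card_insert_of_notMem hnotmem,
          Finset.card_image_of_injective _ hinj2]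
        simp
      calc t * ∏ j : Fin r', N (emb₂ j)
          = ∏ i ∈ insert i₀ (Finset.image emb₂ Finset.univ), N i := by
            rw [Finset.prod_insert hnotmem,
              Finset.prod_image (fun x _ y _ h => hinj2 h)]
        _ ≤ Gfun d (r'+1) N := prod_le_Gfun _ _ _ _ hcardu
        _ ≤ n := hG
    have htle : ∀ j : Fin r', t ≤ N (emb₂ j) := by
      intro j
      apply hmono
      simp only [hi₀def, hemb₂def, Fin.mk_le_mk]
      omega
    have htr : t ^ (r'+1) ≤ n := by
      calc t ^ (r'+1) = t * t ^ r' := by ring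
        _ ≤ t * ∏ j : Fin r', N (emb₂ j) := by
            apply Nat.mul_le_mul_left
            calc t ^ r' = ∏ _j : Fin r', t := by simp
              _ ≤ ∏ j : Fin r', N (emb₂ j) := Finset.prod_le_prod' (fun j _ => htle j)
        _ ≤ n := hprod_u
    simp only [Finset.mem_coe, hT, Finset.mem_sigma, Finset.mem_filter, Finset.mem_Icc,
      Finset.mem_product, Fintype.mem_piFinset]
    refine ⟨⟨⟨ht1, (h1 i₀).2⟩, htr⟩, ?_, ?_⟩
    · intro j
      refine ⟨(h1 (emb₁ j)).1, ?_⟩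
      apply hmono
      simp only [hemb₁def, hi₀def, Fin.mk_le_mk]
      exact le_of_lt j.2
    · rw [Qset_mem ht1]
      refine ⟨htle, ?_, ?_⟩
      · intro a b hab
        apply hmono
        simp only [hemb₂def, Fin.mk_le_mk]
        omega
      · rw [Nat.le_div_iff_mul_le ht1, mul_comm]
        exact hprod_u
  · -- injective
    intro N hN N' hN' heq
    simp only [Sigma.ext_iff, heq_eq_eq, Prod.mk.injEq] at heq
    obtain ⟨h0, hA, hB⟩ := heq
    funext i
    rcases lt_trichotomy i.1 e with hlt | heqe | hgt
    · have : i = emb₁ ⟨i.1, hlt⟩ := Fin.ext rfl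
      rw [this]
      exact congrFun hA ⟨i.1, hlt⟩
    · have : i = i₀ := Fin.ext heqe
      rw [this]; exact h0
    · have hj : i.1 - e - 1 < r' := by omega
      have : i = emb₂ ⟨i.1 - e - 1, hj⟩ := Fin.ext (by simp [hemb₂def]; omega)
      rw [this]
      exact congrFun hB ⟨i.1 - e - 1, hj⟩
end

/-- Counting estimate for the semi-hyperbolic cross: with `S_{d,r}(n) = #{m : H_{d,r}(m) ≤ n}`,
there is `C > 0` with `n^{d/r} ≤ S_{d,r}(n) ≤ C·n^{d/r}` for all `n ≥ 1`. -/
theorem stmt9 (d r : ℕ) (hr : 1 ≤ r) (hrd : r ≤ d - 1) :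
    ∃ C > (0 : ℝ), ∀ n : ℕ, 1 ≤ n →
      (n : ℝ) ^ ((d : ℝ) / r) ≤ (Nat.card {m : Fin d → ℤ // Hdr d r m ≤ n} : ℝ) ∧
      (Nat.card {m : Fin d → ℤ // Hdr d r m ≤ n} : ℝ) ≤ C * (n : ℝ) ^ ((d : ℝ) / r) := by
  have hd2 : 2 ≤ d := by omega
  obtain ⟨r', rfl⟩ : ∃ r', r = r' + 1 := ⟨r - 1, by omega⟩
  obtain ⟨e, he, rfl⟩ : ∃ e, 1 ≤ e ∧ d = e + (r' + 1) :=
    ⟨d - (r' + 1), by omega, by omega⟩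
  have hrd' : r' + 1 ≤ e + (r' + 1) := by omega
  -- real parameters
  set R : ℝ := (r' : ℝ) + 1 with hR
  set Dv : ℝ := (e : ℝ) + (r' : ℝ) + 1 with hDv
  have hRpos : (0 : ℝ) < R := by positivity
  have heR : (1:ℝ) ≤ (e:ℝ) := by exact_mod_cast he
  have hRD : R < Dv := by rw [hR, hDv]; linarith
  set q : ℝ := (Dv / R + 1) / 2 with hq
  have hDR1 : 1 < Dv / R := (one_lt_div hRpos).mpr hRD
  have hq1 : 1 < q := by rw [hq]; linarith
  have hq2 : q < Dv / R := by rw [hq]; linarith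
  set a : ℝ := (e : ℝ) - q - (r' : ℝ) * (q - 1) with ha_def
  have haDv : a = Dv - 1 - R * q := by rw [ha_def, hDv, hR]; ring
  have ha : -1 < a := by
    rw [haDv]
    have : R * q < Dv := (lt_div_iff₀' hRpos).mp hq2
    linarith
  have ha1 : (0:ℝ) < a + 1 := by linarith
  obtain ⟨CQ, hCQ, hQ⟩ := Qset_card q hq1 r'
  have hcastdiv : ((e + (r' + 1) : ℕ) : ℝ) / ((r' + 1 : ℕ) : ℝ) = Dv / R := by
    rw [hDv, hR]; push_cast; ring
  refine ⟨(3:ℝ) ^ (e + (r' + 1)) * (Nat.factorial (e + (r' + 1)) : ℝ) * CQ * (1 + 1 / (a + 1)),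
    by positivity, fun n hn => ?_⟩
  have hn1R : (1:ℝ) ≤ (n:ℝ) := by exact_mod_cast hn
  have hnpos : (0:ℝ) < (n:ℝ) := by linarith
  set K : ℕ := ⌊(n:ℝ) ^ (1/R)⌋₊ with hK
  have hxK : (1:ℝ) ≤ (n:ℝ) ^ (1/R) := Real.one_le_rpow hn1R (by positivity)
  have hK1 : 1 ≤ K := Nat.le_floor (by simpa using hxK)
  have hKle : (K:ℝ) ≤ (n:ℝ) ^ (1/R) := Nat.floor_le (by positivity)
  have hpow_eq : ((n:ℝ) ^ (1/R)) ^ (r' + 1 : ℕ) = (n:ℝ) := by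
    rw [← Real.rpow_natCast ((n:ℝ) ^ (1/R)) (r' + 1), ← Real.rpow_mul hnpos.le]
    rw [show 1/R * ((r' + 1 : ℕ):ℝ) = 1 by rw [hR]; push_cast; field_simp]
    exact Real.rpow_one _
  -- the common exponent identity
  have hpow_nd : (n:ℝ) ^ (Dv / R) = ((n:ℝ) ^ (1/R)) ^ ((e + (r' + 1) : ℕ) : ℝ) := by
    rw [← Real.rpow_mul hnpos.le]
    congr 1
    rw [hDv, hR]; push_cast; field_simp; ring
  rw [natCard_eq_Fbox_card (e + (r' + 1)) (r' + 1) n (by omega) hrd', hcastdiv]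
  constructor
  · -- LOWER BOUND
    have hKr : K ^ (r' + 1) ≤ n := by
      have h1 : ((K:ℝ)) ^ (r' + 1 : ℕ) ≤ ((n:ℝ) ^ (1/R)) ^ (r' + 1 : ℕ) :=
        pow_le_pow_left₀ (by positivity) hKle _
      rw [hpow_eq] at h1
      exact_mod_cast h1
    have hKn : K ≤ n := le_trans (Nat.le_self_pow (by omega) K) hKr
    have hlow := lower_box (e + (r' + 1)) (r' + 1) n K (by omega) hrd' hK1 hKn hKr
    calc (n : ℝ) ^ (Dv / R)
        = ((n:ℝ) ^ (1/R)) ^ ((e + (r' + 1) : ℕ) : ℝ) := hpow_nd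
      _ = ((n:ℝ) ^ (1/R)) ^ (e + (r' + 1) : ℕ) := Real.rpow_natCast _ _
      _ ≤ ((2 * K + 1 : ℕ) : ℝ) ^ (e + (r' + 1) : ℕ) := by
          apply pow_le_pow_left₀ (by positivity)
          have h2 : (n:ℝ) ^ (1/R) < (K:ℝ) + 1 := Nat.lt_floor_add_one _
          push_cast
          linarith
      _ = (((2 * K + 1) ^ (e + (r' + 1)) : ℕ) : ℝ) := by push_cast; ring
      _ ≤ ((Fbox (e + (r' + 1)) (r' + 1) n).card : ℝ) := by exact_mod_cast hlow
  · -- UPPER BOUND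
    set Tset := (Finset.Icc 1 n).filter (fun t => t ^ (r'+1) ≤ n) with hTset
    have hchain : (Fbox (e + (r' + 1)) (r' + 1) n).card ≤
        3 ^ (e + (r' + 1)) * (Nat.factorial (e + (r' + 1)) *
          ∑ t ∈ Tset, t ^ e * (Qset r' t (n/t)).card) := by
      calc (Fbox (e + (r' + 1)) (r' + 1) n).card
          ≤ 3 ^ (e + (r' + 1)) * (Aset (e + (r' + 1)) (r' + 1) n).card :=
            Fbox_le_Aset (e + (r' + 1)) (r' + 1) n hn
        _ ≤ 3 ^ (e + (r' + 1)) * (Nat.factorial (e + (r' + 1)) *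
              (Mset (e + (r' + 1)) (r' + 1) n).card) :=
            Nat.mul_le_mul_left _ (Aset_le_Mset (e + (r' + 1)) (r' + 1) n)
        _ ≤ 3 ^ (e + (r' + 1)) * (Nat.factorial (e + (r' + 1)) *
              ∑ t ∈ Tset, t ^ e * (Qset r' t (n/t)).card) :=
            Nat.mul_le_mul_left _ (Nat.mul_le_mul_left _ (Mset_le_sum e r' n he hn))
    -- bound each term of the sum, in ℝ
    have hterm : ∀ t ∈ Tset, ((t ^ e * (Qset r' t (n/t)).card : ℕ) : ℝ)
        ≤ CQ * (n:ℝ) ^ q * (t:ℝ) ^ a := by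
      intro t htm
      simp only [hTset, Finset.mem_filter, Finset.mem_Icc] at htm
      obtain ⟨⟨ht1, htn⟩, htr⟩ := htm
      have htpos : (0:ℝ) < (t:ℝ) := by exact_mod_cast ht1
      have h1 : ((Qset r' t (n/t)).card : ℝ)
          ≤ CQ * ((n:ℝ)/(t:ℝ)) ^ q * (t:ℝ) ^ (-((r':ℝ) * (q-1))) := by
        calc ((Qset r' t (n/t)).card : ℝ)
            ≤ CQ * ((n/t : ℕ):ℝ) ^ q * (t:ℝ) ^ (-((r':ℝ) * (q-1))) := hQ t (n/t) ht1
          _ ≤ CQ * ((n:ℝ)/(t:ℝ)) ^ q * (t:ℝ) ^ (-((r':ℝ) * (q-1))) := by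
              have h2 : ((n/t : ℕ):ℝ) ^ q ≤ ((n:ℝ)/(t:ℝ)) ^ q :=
                Real.rpow_le_rpow (Nat.cast_nonneg _) Nat.cast_div_le (by linarith)
              have h3 : (0:ℝ) ≤ (t:ℝ) ^ (-((r':ℝ) * (q-1))) := Real.rpow_nonneg htpos.le _
              exact mul_le_mul_of_nonneg_right (mul_le_mul_of_nonneg_left h2 hCQ.le) h3
      calc ((t ^ e * (Qset r' t (n/t)).card : ℕ) : ℝ)
          = (t:ℝ) ^ (e:ℕ) * ((Qset r' t (n/t)).card : ℝ) := by push_cast; ring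
        _ ≤ (t:ℝ) ^ (e:ℕ) * (CQ * ((n:ℝ)/(t:ℝ)) ^ q * (t:ℝ) ^ (-((r':ℝ) * (q-1)))) := by
            apply mul_le_mul_of_nonneg_left h1 (by positivity)
        _ = CQ * (n:ℝ) ^ q * (t:ℝ) ^ a := by
            rw [Real.div_rpow hnpos.le htpos.le, div_eq_mul_inv, ← Real.rpow_neg htpos.le,
              ← Real.rpow_natCast (t:ℝ) e]
            rw [show (t:ℝ) ^ ((e:ℕ):ℝ) * ((CQ * ((n:ℝ) ^ q * (t:ℝ) ^ (-q))) * (t:ℝ) ^ (-((r':ℝ) * (q-1))))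
              = CQ * (n:ℝ) ^ q * ((t:ℝ) ^ ((e:ℕ):ℝ) * (t:ℝ) ^ (-q) * (t:ℝ) ^ (-((r':ℝ) * (q-1)))) by ring]
            rw [← Real.rpow_add htpos, ← Real.rpow_add htpos]
            congr 1
    -- sum the bound
    have hsub : Tset ⊆ Finset.Icc 1 K := by
      intro t htm
      simp only [hTset, Finset.mem_filter, Finset.mem_Icc] at htm
      obtain ⟨⟨ht1, htn⟩, htr⟩ := htm
      rw [Finset.mem_Icc]
      refine ⟨ht1, Nat.le_floor ?_⟩
      have h1 : ((t:ℝ)) ^ ((r' + 1 : ℕ):ℝ) ≤ (n:ℝ) := by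
        rw [Real.rpow_natCast]
        exact_mod_cast htr
      have h2 : (((t:ℝ) ^ ((r' + 1 : ℕ):ℝ)) ^ (1/R)) ≤ (n:ℝ) ^ (1/R) :=
        Real.rpow_le_rpow (by positivity) h1 (by positivity)
      rwa [← Real.rpow_mul (Nat.cast_nonneg t),
        show ((r' + 1 : ℕ):ℝ) * (1/R) = 1 by rw [hR]; push_cast; field_simp,
        Real.rpow_one] at h2
    have hsum : ∑ t ∈ Tset, (t:ℝ) ^ a ≤ (1 + 1/(a+1)) * ((n:ℝ) ^ (1/R)) ^ (a + 1) := by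
      calc ∑ t ∈ Tset, (t:ℝ) ^ a ≤ ∑ t ∈ Finset.Icc 1 K, (t:ℝ) ^ a := by
            apply Finset.sum_le_sum_of_subset_of_nonneg hsub
            intro t htm _
            have : 1 ≤ t := (Finset.mem_Icc.mp htm).1
            exact Real.rpow_nonneg (Nat.cast_nonneg t) a
        _ ≤ (1 + 1/(a+1)) * (K:ℝ) ^ (a+1) := sum_rpow_head a ha K hK1
        _ ≤ (1 + 1/(a+1)) * ((n:ℝ) ^ (1/R)) ^ (a + 1) := by
            have h4 : (K:ℝ) ^ (a+1) ≤ ((n:ℝ) ^ (1/R)) ^ (a + 1) :=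
              Real.rpow_le_rpow (Nat.cast_nonneg K) hKle ha1.le
            have h5 : (0:ℝ) < 1 + 1/(a+1) := by positivity
            nlinarith
    -- final exponent computation
    have hfinal : (n:ℝ) ^ q * ((n:ℝ) ^ (1/R)) ^ (a + 1) = (n:ℝ) ^ (Dv / R) := by
      rw [← Real.rpow_mul hnpos.le, ← Real.rpow_add hnpos]
      congr 1
      have h6 : a + 1 = Dv - R * q := by rw [haDv]; ring
      rw [h6]
      field_simp
      ring
    have hpos1 : (0:ℝ) ≤ CQ * (n:ℝ) ^ q := by positivity
    calc ((Fbox (e + (r' + 1)) (r' + 1) n).card : ℝ)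
        ≤ ((3 ^ (e + (r' + 1)) * (Nat.factorial (e + (r' + 1)) *
            ∑ t ∈ Tset, t ^ e * (Qset r' t (n/t)).card) : ℕ) : ℝ) := by
          exact_mod_cast hchain
      _ = (3:ℝ) ^ (e + (r' + 1)) * (Nat.factorial (e + (r' + 1)) : ℝ) *
            ∑ t ∈ Tset, ((t ^ e * (Qset r' t (n/t)).card : ℕ) : ℝ) := by
          push_cast
          ring
      _ ≤ (3:ℝ) ^ (e + (r' + 1)) * (Nat.factorial (e + (r' + 1)) : ℝ) *
            ∑ t ∈ Tset, CQ * (n:ℝ) ^ q * (t:ℝ) ^ a := by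
          apply mul_le_mul_of_nonneg_left (Finset.sum_le_sum hterm) (by positivity)
      _ = (3:ℝ) ^ (e + (r' + 1)) * (Nat.factorial (e + (r' + 1)) : ℝ) *
            (CQ * (n:ℝ) ^ q * ∑ t ∈ Tset, (t:ℝ) ^ a) := by
          rw [← Finset.mul_sum]
      _ ≤ (3:ℝ) ^ (e + (r' + 1)) * (Nat.factorial (e + (r' + 1)) : ℝ) *
            (CQ * (n:ℝ) ^ q * ((1 + 1/(a+1)) * ((n:ℝ) ^ (1/R)) ^ (a + 1))) := by
          apply mul_le_mul_of_nonneg_left _ (by positivity)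
          exact mul_le_mul_of_nonneg_left hsum hpos1
      _ = (3:ℝ) ^ (e + (r' + 1)) * (Nat.factorial (e + (r' + 1)) : ℝ) * CQ * (1 + 1/(a+1)) *
            ((n:ℝ) ^ q * ((n:ℝ) ^ (1/R)) ^ (a + 1)) := by ring
      _ = (3:ℝ) ^ (e + (r' + 1)) * (Nat.factorial (e + (r' + 1)) : ℝ) * CQ * (1 + 1/(a+1)) *
            (n:ℝ) ^ (Dv / R) := by rw [hfinal]
end

section
/- Fix integers 1 ≤ r ≤ d−1 and let σ: ℕ → ℤ^d be a bijection consistent with H_{d,r} (semi-hyperbolic of order r). Then there exist constants C₁, C₂ > 0 such that C₁·n^{r/d} ≤ H_{d,r}(σ(n)) ≤ C₂·n^{r/d} for all n ∈ ℕ. -/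
namespace Aux

variable {d : ℕ}

/-- `Hsub k u m`: sup over `k`-subsets of `u` of the product of `max |m i| 1`. -/
def Hsub (k : ℕ) (u : Finset (Fin d)) (m : Fin d → ℤ) : ℕ :=
  (u.powersetCard k).sup fun s => ∏ i ∈ s, max (m i).natAbs 1

lemma one_le_prod_max (m : Fin d → ℤ) (s : Finset (Fin d)) :
    1 ≤ ∏ i ∈ s, max (m i).natAbs 1 :=
  Finset.one_le_prod' fun i _ => le_max_right _ _

/-- counting finset: points supported on `u`, capped by `c`, with `Hsub k u ≤ T`. -/
noncomputable def cnt (u : Finset (Fin d)) (k c T : ℕ) : Finset (Fin d → ℤ) :=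
  (Fintype.piFinset fun i => if i ∈ u then Finset.Icc (-(c:ℤ)) (c:ℤ) else {0}).filter
    fun m => Hsub k u m ≤ T

lemma mem_cnt {u : Finset (Fin d)} {k c T : ℕ} {m : Fin d → ℤ} :
    m ∈ cnt u k c T ↔ (∀ i, if i ∈ u then m i ∈ Finset.Icc (-(c:ℤ)) (c:ℤ) else m i = 0)
      ∧ Hsub k u m ≤ T := by
  simp only [cnt, Finset.mem_filter, Fintype.mem_piFinset]
  constructor
  · rintro ⟨h1, h2⟩
    refine ⟨fun i => ?_, h2⟩
    have := h1 i
    split_ifs with h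
    · simpa [h] using this
    · simpa [h] using this
  · rintro ⟨h1, h2⟩
    refine ⟨fun i => ?_, h2⟩
    have := h1 i
    split_ifs at this with h
    · simpa [h]
    · simp [h, this]

lemma cnt_card_le_box (u : Finset (Fin d)) (k c T : ℕ) :
    (cnt u k c T).card ≤ (2 * c + 1) ^ u.card := by
  classical
  calc (cnt u k c T).card
      ≤ (Fintype.piFinset fun i => if i ∈ u then Finset.Icc (-(c:ℤ)) (c:ℤ) else ({0} : Finset ℤ)).card :=
        Finset.card_filter_le _ _
    _ = (2 * c + 1) ^ u.card := by
        rw [Fintype.card_piFinset]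
        have : ∀ i : Fin d, (if i ∈ u then Finset.Icc (-(c:ℤ)) (c:ℤ) else ({0}:Finset ℤ)).card
            = if i ∈ u then 2 * c + 1 else 1 := by
          intro i; split_ifs
          · rw [Int.card_Icc]; omega
          · simp
        simp only [this]
        rw [Finset.prod_ite_mem, Finset.univ_inter, Finset.prod_const]

lemma prod_le_Hsub {k : ℕ} {u s : Finset (Fin d)} (m : Fin d → ℤ)
    (hs : s ∈ u.powersetCard k) :
    ∏ i ∈ s, max (m i).natAbs 1 ≤ Hsub k u m :=
  Finset.le_sup (f := fun s => ∏ i ∈ s, max (m i).natAbs 1) hs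

lemma coord_le_Hsub {k : ℕ} (hk : 1 ≤ k) {u : Finset (Fin d)} (hku : k ≤ u.card)
    {i : Fin d} (hi : i ∈ u) (m : Fin d → ℤ) :
    max (m i).natAbs 1 ≤ Hsub k u m := by
  obtain ⟨s, hs1, hs2, hs3⟩ := Finset.exists_subsuperset_card_eq
    (Finset.singleton_subset_iff.mpr hi) (by simpa using hk) hku
  refine le_trans ?_ (prod_le_Hsub m (Finset.mem_powersetCard.mpr ⟨hs2, hs3⟩))
  exact Finset.single_le_prod' (f := fun j => max (m j).natAbs 1)
    (fun j _ => le_max_right _ _) (hs1 (Finset.mem_singleton_self i))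

lemma one_le_Hsub {k : ℕ} {u : Finset (Fin d)} (hku : k ≤ u.card) (m : Fin d → ℤ) :
    1 ≤ Hsub k u m := by
  obtain ⟨s, hs1, hs2⟩ := Finset.exists_subset_card_eq hku
  exact le_trans (one_le_prod_max m s)
    (prod_le_Hsub m (Finset.mem_powersetCard.mpr ⟨hs1, hs2⟩))

lemma cnt_base (u : Finset (Fin d)) (c T : ℕ) (hu : 1 ≤ u.card) :
    (cnt u 1 c T).card ≤ (2 * T + 1) ^ u.card := by
  classical
  have hsub : cnt u 1 c T ⊆
      Fintype.piFinset fun i => if i ∈ u then Finset.Icc (-(T:ℤ)) (T:ℤ) else ({0}:Finset ℤ) := by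
    intro m hm
    rw [mem_cnt] at hm
    rw [Fintype.mem_piFinset]
    intro i
    have h1 := hm.1 i
    split_ifs with h
    · simp only [h, if_true] at h1
      have h2 : max (m i).natAbs 1 ≤ T := le_trans (coord_le_Hsub le_rfl hu h m) hm.2
      have : (m i).natAbs ≤ T := le_trans (le_max_left _ _) h2
      simp only [Finset.mem_Icc]
      omega
    · simp only [h, if_false] at h1
      simp [h1]
  calc (cnt u 1 c T).card ≤ _ := Finset.card_le_card hsub
    _ = (2 * T + 1) ^ u.card := by
        rw [Fintype.card_piFinset]
        have : ∀ i : Fin d, (if i ∈ u then Finset.Icc (-(T:ℤ)) (T:ℤ) else ({0}:Finset ℤ)).card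
            = if i ∈ u then 2 * T + 1 else 1 := by
          intro i; split_ifs
          · rw [Int.card_Icc]; omega
          · simp
        simp only [this]
        rw [Finset.prod_ite_mem, Finset.univ_inter, Finset.prod_const]

lemma cnt_rec (u : Finset (Fin d)) (k c T : ℕ) (hku : k + 1 ≤ u.card) :
    (cnt u (k+1) c T).card ≤
      ∑ j ∈ u, ∑ M ∈ Finset.Icc 1 T, 3 * (cnt (u.erase j) k M (T / M)).card := by
  classical
  set P : Fin d → Finset (Fin d → ℤ) := fun j =>
    (cnt u (k+1) c T).filter (fun m => ∀ i ∈ u, max (m i).natAbs 1 ≤ max (m j).natAbs 1) with hP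
  have hunion : cnt u (k+1) c T ⊆ u.biUnion P := by
    intro m hm
    have hune : u.Nonempty := Finset.card_pos.mp (by omega)
    obtain ⟨j, hj, hjmax⟩ := Finset.exists_max_image u (fun i => max (m i).natAbs 1) hune
    exact Finset.mem_biUnion.mpr ⟨j, hj, Finset.mem_filter.mpr ⟨hm, hjmax⟩⟩
  refine le_trans (Finset.card_le_card hunion) (le_trans (Finset.card_biUnion_le) ?_)
  refine Finset.sum_le_sum fun j hj => ?_
  -- slice P j by the value M = max |m j| 1
  have hslice : P j ⊆ (Finset.Icc 1 T).biUnion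
      (fun M => (P j).filter (fun m => max (m j).natAbs 1 = M)) := by
    intro m hm
    refine Finset.mem_biUnion.mpr ⟨max (m j).natAbs 1, ?_, Finset.mem_filter.mpr ⟨hm, rfl⟩⟩
    have hm' := (Finset.mem_filter.mp hm).1
    rw [mem_cnt] at hm'
    have : max (m j).natAbs 1 ≤ T := le_trans (coord_le_Hsub (by omega) hku hj m) hm'.2
    simp only [Finset.mem_Icc]
    omega
  refine le_trans (Finset.card_le_card hslice) (le_trans (Finset.card_biUnion_le) ?_)
  refine Finset.sum_le_sum fun M hM => ?_
  rw [Finset.mem_Icc] at hM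
  -- injection into {-M,0,M} ×ˢ cnt (u.erase j) k M (T/M)
  have hinj : ∀ m ∈ (P j).filter (fun m => max (m j).natAbs 1 = M),
      ((m j, Function.update m j 0) : ℤ × (Fin d → ℤ)) ∈
        ({-(M:ℤ), 0, (M:ℤ)} : Finset ℤ) ×ˢ cnt (u.erase j) k M (T / M) := by
    intro m hm
    obtain ⟨hmPj, hMval⟩ := Finset.mem_filter.mp hm
    obtain ⟨hmcnt, hmax⟩ := Finset.mem_filter.mp hmPj
    rw [mem_cnt] at hmcnt
    rw [Finset.mem_product]
    constructor
    · -- m j ∈ {-M, 0, M}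
      simp only [Finset.mem_insert, Finset.mem_singleton]
      rcases Int.natAbs_eq (m j) with h | h <;> omega
    · rw [mem_cnt]
      constructor
      · intro i
        split_ifs with h
        · obtain ⟨hij, hiu⟩ := Finset.mem_erase.mp h
          show Function.update m j 0 i ∈ _
          rw [Function.update_of_ne hij]
          have := hmax i hiu
          have : (m i).natAbs ≤ M := by omega
          simp only [Finset.mem_Icc]; omega
        · show Function.update m j 0 i = 0
          by_cases hij : i = j
          · subst hij; simp
          · rw [Function.update_of_ne hij]
            have hiu : i ∉ u := fun hiu => h (Finset.mem_erase.mpr ⟨hij, hiu⟩)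
            have := hmcnt.1 i
            simpa [hiu] using this
      · -- Hsub k (erase j) ≤ T / M
        show Hsub k (u.erase j) (Function.update m j 0) ≤ T / M
        apply Finset.sup_le
        intro s hs
        obtain ⟨hs1, hs2⟩ := Finset.mem_powersetCard.mp hs
        have hjs : j ∉ s := fun hjs => (Finset.mem_erase.mp (hs1 hjs)).1 rfl
        have hprodeq : ∏ i ∈ s, max ((Function.update m j 0) i).natAbs 1
            = ∏ i ∈ s, max (m i).natAbs 1 := by
          apply Finset.prod_congr rfl
          intro i hi
          rw [Function.update_of_ne (fun hij => hjs (by rw [← hij]; exact hi))]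
        rw [hprodeq]
        rw [Nat.le_div_iff_mul_le (by omega : 0 < M)]
        have hins : insert j s ∈ u.powersetCard (k+1) := by
          rw [Finset.mem_powersetCard]
          constructor
          · intro i hi
            rcases Finset.mem_insert.mp hi with h | h
            · rw [h]; exact hj
            · exact (Finset.mem_erase.mp (hs1 h)).2
          · rw [Finset.card_insert_of_notMem hjs, hs2]
        have : ∏ i ∈ insert j s, max (m i).natAbs 1 ≤ T :=
          le_trans (prod_le_Hsub m hins) hmcnt.2
        rw [Finset.prod_insert hjs, hMval] at this
        rwa [Nat.mul_comm]
  have hinj2 : Set.InjOn (fun m => ((m j, Function.update m j 0) : ℤ × (Fin d → ℤ)))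
      ((P j).filter (fun m => max (m j).natAbs 1 = M)) := by
    intro m1 _ m2 _ heq
    simp only [Prod.mk.injEq] at heq
    funext i
    by_cases hij : i = j
    · subst hij; exact heq.1
    · have := congrFun heq.2 i
      rwa [Function.update_of_ne hij, Function.update_of_ne hij] at this
  calc ((P j).filter (fun m => max (m j).natAbs 1 = M)).card
      ≤ (({-(M:ℤ), 0, (M:ℤ)} : Finset ℤ) ×ˢ cnt (u.erase j) k M (T / M)).card :=
        Finset.card_le_card_of_injOn _ hinj hinj2
    _ ≤ 3 * (cnt (u.erase j) k M (T / M)).card := by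
        rw [Finset.card_product]
        have h1 : ({-(M:ℤ), 0, (M:ℤ)} : Finset ℤ).card ≤ ({0, (M:ℤ)} : Finset ℤ).card + 1 :=
          Finset.card_insert_le _ _
        have h2 : ({0, (M:ℤ)} : Finset ℤ).card ≤ ({(M:ℤ)} : Finset ℤ).card + 1 :=
          Finset.card_insert_le _ _
        have h3 : ({(M:ℤ)} : Finset ℤ).card = 1 := Finset.card_singleton _
        have : ({-(M:ℤ), 0, (M:ℤ)} : Finset ℤ).card ≤ 3 := by omega
        exact Nat.mul_le_mul_right _ this

lemma root_spec (r T : ℕ) (hr : 1 ≤ r) (hT : 1 ≤ T) :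
    ∃ s : ℕ, 1 ≤ s ∧ s ^ r ≤ T ∧ T < (s + 1) ^ r ∧ s ≤ T := by
  classical
  set s := Nat.findGreatest (fun s => s ^ r ≤ T) T with hs
  have h1 : 1 ≤ s := Nat.le_findGreatest hT (by simpa using hT)
  have h2 : s ^ r ≤ T := Nat.findGreatest_spec (P := fun s => s ^ r ≤ T) hT (by simpa using hT)
  have h4 : s ≤ T := Nat.findGreatest_le T
  refine ⟨s, h1, h2, ?_, h4⟩
  by_cases hc : s + 1 ≤ T
  · have := Nat.findGreatest_is_greatest (P := fun s => s ^ r ≤ T)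
      (k := s + 1) (by omega) hc
    omega
  · have hsT : s = T := by omega
    have : s + 1 ≤ (s + 1) ^ r := Nat.le_self_pow (by omega) _
    omega

lemma mvt_step {p : ℝ} (hp : 1 < p) {x : ℝ} (hx : 1 ≤ x) :
    (p - 1) * (x + 1) ^ (-p) ≤ x ^ (1 - p) - (x + 1) ^ (1 - p) := by
  have hx0 : 0 < x := by linarith
  obtain ⟨c, hc, hceq⟩ := exists_hasDerivAt_eq_slope (fun t => t ^ (1 - p))
    (fun t => (1 - p) * t ^ (-p)) (by linarith : x < x + 1)
    (fun t ht => by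
      exact (Real.continuousAt_rpow_const t (1 - p)
        (Or.inl (by rintro rfl; simp at ht; linarith [ht.1]))).continuousWithinAt)
    (fun t ht => by
      have ht0 : t ≠ 0 := by rintro rfl; simp at ht; linarith [ht.1]
      have hder := Real.hasDerivAt_rpow_const (x := t) (p := 1 - p) (Or.inl ht0)
      have h15 : (1 : ℝ) - p - 1 = -p := by ring
      rw [h15] at hder
      exact hder)
  rw [show x + 1 - x = 1 by ring, div_one] at hceq
  have hcx : 0 < c := lt_trans hx0 hc.1
  have hmono : (x + 1) ^ (-p) ≤ c ^ (-p) :=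
    Real.rpow_le_rpow_of_nonpos hcx (le_of_lt hc.2) (by linarith)
  have : x ^ (1 - p) - (x + 1) ^ (1 - p) = (p - 1) * c ^ (-p) := by
    have := hceq
    nlinarith [this]
  rw [this]
  have hcp : 0 ≤ c ^ (-p) := Real.rpow_nonneg hcx.le _
  nlinarith

lemma tail_sum {p : ℝ} (hp : 1 < p) (a : ℕ) (ha : 1 ≤ a) (b : ℕ) :
    ∑ M ∈ Finset.Ioc a b, ((M : ℝ)) ^ (-p) ≤ (a : ℝ) ^ (1 - p) / (p - 1) := by
  rcases le_or_gt a b with hab | hab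
  · have key : ∀ n, a ≤ n → ∑ M ∈ Finset.Ioc a n, ((M : ℝ)) ^ (-p)
        ≤ ((a : ℝ) ^ (1 - p) - (n : ℝ) ^ (1 - p)) / (p - 1) := by
      intro n hn
      refine Nat.le_induction ?_ ?_ n hn
      · simp
      · intro n hn IH
        rw [Finset.sum_Ioc_succ_top hn]
        have hstep : ((n : ℝ) + 1) ^ (-p) ≤
            ((n : ℝ) ^ (1 - p) - ((n : ℝ) + 1) ^ (1 - p)) / (p - 1) := by
          rw [le_div_iff₀ (by linarith)]
          have := mvt_step hp (x := (n : ℝ)) (by exact_mod_cast le_trans ha hn)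
          linarith
        push_cast
        calc ∑ M ∈ Finset.Ioc a n, ((M : ℝ)) ^ (-p) + ((n : ℝ) + 1) ^ (-p)
            ≤ ((a : ℝ) ^ (1 - p) - (n : ℝ) ^ (1 - p)) / (p - 1)
              + ((n : ℝ) ^ (1 - p) - ((n : ℝ) + 1) ^ (1 - p)) / (p - 1) :=
              add_le_add IH hstep
          _ = ((a : ℝ) ^ (1 - p) - ((n : ℝ) + 1) ^ (1 - p)) / (p - 1) := by ring
    refine le_trans (key b hab) ?_
    have hbpos : (0 : ℝ) < b := by exact_mod_cast lt_of_lt_of_le ha hab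
    have : 0 ≤ ((b : ℝ)) ^ (1 - p) := Real.rpow_nonneg hbpos.le _
    apply div_le_div_of_nonneg_right ?_ (by linarith)
    · linarith
  · rw [Finset.Ioc_eq_empty (by omega), Finset.sum_empty]
    exact div_nonneg (Real.rpow_nonneg (Nat.cast_nonneg a) _) (by linarith)

lemma upper_count (r : ℕ) (hr : 1 ≤ r) :
    ∀ u : Finset (Fin d), r < u.card →
    ∃ C : ℝ, 0 < C ∧ ∀ c T : ℕ, 1 ≤ T →
      ((cnt u r c T).card : ℝ) ≤ C * (T : ℝ) ^ ((u.card : ℝ) / r) := by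
  induction r, hr using Nat.le_induction with
  | base =>
    intro u hu
    refine ⟨3 ^ u.card, by positivity, fun c T hT => ?_⟩
    have hTpos : (0:ℝ) < T := by exact_mod_cast hT
    calc ((cnt u 1 c T).card : ℝ)
        ≤ ((2 * T + 1 : ℕ) : ℝ) ^ u.card := by
          exact_mod_cast cnt_base u c T (by omega)
      _ ≤ ((3 * T : ℕ) : ℝ) ^ u.card := by
          apply pow_le_pow_left₀ (by positivity)
          exact_mod_cast (by omega : 2 * T + 1 ≤ 3 * T)
      _ = 3 ^ u.card * (T : ℝ) ^ ((u.card : ℝ) / ((1:ℕ):ℝ)) := by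
          push_cast
          rw [div_one, Real.rpow_natCast, mul_pow]
  | succ k hk IH =>
    intro u hu
    obtain ⟨e, he⟩ : ∃ e, u.card = e + 1 := ⟨u.card - 1, by omega⟩
    have hek : k < e := by omega
    have hne : u.Nonempty := Finset.card_pos.mp (by omega)
    have hexC : ∀ j : Fin d, ∃ C : ℝ, 0 < C ∧ (j ∈ u → ∀ c T : ℕ, 1 ≤ T →
        ((cnt (u.erase j) k c T).card : ℝ) ≤ C * (T : ℝ) ^ ((e : ℝ) / k)) := by
      intro j
      by_cases hj : j ∈ u
      · obtain ⟨C, hC, hCb⟩ := IH (u.erase j)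
          (by rw [Finset.card_erase_of_mem hj]; omega)
        refine ⟨C, hC, fun _ c T hT => ?_⟩
        have hcard : ((u.erase j).card : ℝ) = (e : ℝ) := by
          rw [Finset.card_erase_of_mem hj, he]; simp
        have := hCb c T hT
        rwa [hcard] at this
      · exact ⟨1, one_pos, fun h => absurd h hj⟩
    choose F hFpos hFb using hexC
    set C0 : ℝ := ∑ j ∈ u, F j with hC0
    have hC0pos : 0 < C0 := Finset.sum_pos (fun j _ => hFpos j) hne
    have hFle : ∀ j ∈ u, F j ≤ C0 := fun j hj =>
      Finset.single_le_sum (fun i _ => (hFpos i).le) hj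
    have hkpos : (0:ℝ) < k := by exact_mod_cast hk
    have hk0 : (k:ℝ) ≠ 0 := ne_of_gt hkpos
    set q : ℝ := (e : ℝ) / k with hq
    have hq1 : 1 < q := by
      rw [hq, lt_div_iff₀ hkpos, one_mul]
      exact_mod_cast hek
    have hq0 : 0 ≤ q := by linarith
    set B : ℝ := 3 * 3 ^ e + 3 * C0 * (2 ^ (q - 1) / (q - 1)) with hB
    have hBpos : 0 < B := by
      have h1 : (0:ℝ) < 2 ^ (q - 1) := Real.rpow_pos_of_pos (by norm_num) _
      have h2 : (0:ℝ) < 3 ^ e := by positivity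
      have h3 : (0:ℝ) < 2 ^ (q-1) / (q-1) := div_pos h1 (by linarith)
      have h4 : (0:ℝ) < 3 * C0 * (2 ^ (q-1) / (q-1)) :=
        mul_pos (mul_pos (by norm_num) hC0pos) h3
      rw [hB]; linarith [h2, h4]
    have hucpos : (0:ℝ) < u.card := by
      have : 0 < u.card := by omega
      exact_mod_cast this
    refine ⟨(u.card : ℝ) * B, by positivity, fun c T hT => ?_⟩
    have hT0 : (0:ℝ) < T := by exact_mod_cast hT
    obtain ⟨m₀, hm1, hm2, hm3, hm4⟩ := root_spec (k+1) T (by omega) hT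
    set x : ℝ := (T:ℝ) ^ ((1:ℝ)/((k:ℝ)+1)) with hx
    have hk1pos : (0:ℝ) < (k:ℝ) + 1 := by linarith
    have hxpos : 0 < x := Real.rpow_pos_of_pos hT0 _
    have hm₀x : (m₀:ℝ) ≤ x := by
      have h : ((m₀:ℝ)) ^ ((k+1 : ℕ)) ≤ (T:ℝ) := by exact_mod_cast hm2
      calc (m₀:ℝ) = (((m₀:ℝ) ^ ((k+1:ℕ))) : ℝ) ^ ((1:ℝ)/((k:ℝ)+1)) := by
            rw [← Real.rpow_natCast (m₀:ℝ) (k+1), ← Real.rpow_mul (Nat.cast_nonneg m₀)]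
            push_cast
            rw [mul_one_div, div_self (by linarith), Real.rpow_one]
        _ ≤ x := Real.rpow_le_rpow (by positivity) h (by positivity)
    have hx2m : x ≤ 2 * (m₀:ℝ) := by
      have hnat : T ≤ (2 * m₀) ^ (k+1) :=
        le_trans (le_of_lt hm3) (Nat.pow_le_pow_left (by omega) _)
      have h : (T:ℝ) ≤ (2 * (m₀:ℝ)) ^ ((k+1:ℕ)) := by exact_mod_cast hnat
      calc x ≤ ((2 * (m₀:ℝ)) ^ ((k+1:ℕ))) ^ ((1:ℝ)/((k:ℝ)+1)) :=
            Real.rpow_le_rpow hT0.le h (by positivity)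
        _ = 2 * (m₀:ℝ) := by
            rw [← Real.rpow_natCast (2*(m₀:ℝ)) (k+1), ← Real.rpow_mul (by positivity)]
            push_cast
            rw [mul_one_div, div_self (by linarith), Real.rpow_one]
    set Y : ℝ := (T:ℝ) ^ (((e:ℝ)+1)/((k:ℝ)+1)) with hY
    have hYpos : 0 < Y := Real.rpow_pos_of_pos hT0 _
    have hxY : x ^ ((e+1 : ℕ)) = Y := by
      rw [← Real.rpow_natCast x (e+1), hx, ← Real.rpow_mul hT0.le]
      congr 1
      push_cast
      rw [one_div_mul_eq_div]
    have hTY : (T:ℝ) ^ q * x ^ (1 - q) = Y := by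
      rw [hx, ← Real.rpow_mul hT0.le, ← Real.rpow_add hT0]
      congr 1
      rw [hq]
      field_simp
      ring
    -- main estimate
    have hrec := cnt_rec u k c T (by omega)
    have hrecR : ((cnt u (k+1) c T).card : ℝ) ≤
        ∑ j ∈ u, ∑ M ∈ Finset.Icc 1 T,
          3 * ((cnt (u.erase j) k M (T / M)).card : ℝ) := by
      exact_mod_cast hrec
    refine le_trans hrecR ?_
    have hgoalY : (u.card : ℝ) * B * (T:ℝ) ^ ((u.card : ℝ) / ((k:ℕ)+1 : ℕ)) =
        (u.card : ℝ) * (B * Y) := by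
      rw [hY, mul_assoc]
      congr 3
      rw [he]
      push_cast
      ring
    rw [hgoalY]
    have hsplit : Finset.Icc 1 T = Finset.Icc 1 m₀ ∪ Finset.Ioc m₀ T := by
      ext M
      simp only [Finset.mem_Icc, Finset.mem_union, Finset.mem_Ioc]
      omega
    have hdisj : Disjoint (Finset.Icc 1 m₀) (Finset.Ioc m₀ T) := by
      rw [Finset.disjoint_left]
      intro M h1 h2
      rw [Finset.mem_Icc] at h1
      rw [Finset.mem_Ioc] at h2
      omega
    have hperj : ∀ j ∈ u, ∑ M ∈ Finset.Icc 1 T,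
        3 * ((cnt (u.erase j) k M (T / M)).card : ℝ) ≤ B * Y := by
      intro j hj
      have hcej : (u.erase j).card = e := by
        rw [Finset.card_erase_of_mem hj]; omega
      rw [hsplit, Finset.sum_union hdisj]
      have hpart1 : ∑ M ∈ Finset.Icc 1 m₀,
          3 * ((cnt (u.erase j) k M (T / M)).card : ℝ) ≤ 3 * 3 ^ e * Y := by
        have hterm : ∀ M ∈ Finset.Icc 1 m₀,
            3 * ((cnt (u.erase j) k M (T / M)).card : ℝ) ≤ 3 * ((3 * m₀ : ℕ) : ℝ) ^ e := by
          intro M hM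
          rw [Finset.mem_Icc] at hM
          have hbox := cnt_card_le_box (u.erase j) k M (T / M)
          rw [hcej] at hbox
          have h1 : ((cnt (u.erase j) k M (T / M)).card : ℝ) ≤ ((2*M+1 : ℕ) : ℝ) ^ e := by
            exact_mod_cast hbox
          have h2 : ((2*M+1 : ℕ):ℝ) ^ e ≤ ((3 * m₀ : ℕ) : ℝ) ^ e := by
            apply pow_le_pow_left₀ (by positivity)
            exact_mod_cast (by omega : 2*M+1 ≤ 3*m₀)
          nlinarith [le_trans h1 h2]
        refine le_trans (Finset.sum_le_card_nsmul _ _ _ hterm) ?_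
        rw [Nat.card_Icc, nsmul_eq_mul]
        have hcard : ((m₀ + 1 - 1 : ℕ) : ℝ) = (m₀ : ℝ) := by norm_num
        rw [hcard]
        have hm₀e : (m₀:ℝ) ^ ((e+1:ℕ)) ≤ Y := by
          rw [← hxY]
          exact pow_le_pow_left₀ (Nat.cast_nonneg m₀) hm₀x _
        calc (m₀:ℝ) * (3 * ((3 * m₀ : ℕ):ℝ) ^ e) = 3 * 3 ^ e * (m₀:ℝ) ^ ((e+1:ℕ)) := by
              push_cast; rw [mul_pow]; ring
          _ ≤ 3 * 3 ^ e * Y := by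
              apply mul_le_mul_of_nonneg_left hm₀e (by positivity)
      have hpart2 : ∑ M ∈ Finset.Ioc m₀ T,
          3 * ((cnt (u.erase j) k M (T / M)).card : ℝ)
            ≤ 3 * C0 * (2 ^ (q-1) / (q-1)) * Y := by
        have hterm : ∀ M ∈ Finset.Ioc m₀ T,
            3 * ((cnt (u.erase j) k M (T / M)).card : ℝ)
              ≤ 3 * C0 * (T:ℝ) ^ q * (M:ℝ) ^ (-q) := by
          intro M hM
          rw [Finset.mem_Ioc] at hM
          have hM1 : 1 ≤ M := by omega
          have hMpos : (0:ℝ) < M := by exact_mod_cast hM1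
          have hdiv1 : 1 ≤ T / M := (Nat.one_le_div_iff (by omega)).mpr hM.2
          have hIH := hFb j hj M (T / M) hdiv1
          have h2 : (((T / M : ℕ)) : ℝ) ^ q ≤ (T:ℝ) ^ q * (M:ℝ) ^ (-q) := by
            have hc : (((T / M : ℕ)) : ℝ) ≤ (T:ℝ) / (M:ℝ) := Nat.cast_div_le
            have h := Real.rpow_le_rpow (Nat.cast_nonneg _) hc hq0
            refine le_trans h ?_
            rw [Real.div_rpow hT0.le hMpos.le, Real.rpow_neg hMpos.le, div_eq_mul_inv]
          have h3 : ((cnt (u.erase j) k M (T / M)).card : ℝ) ≤ C0 * ((T:ℝ) ^ q * (M:ℝ) ^ (-q)) := by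
            refine le_trans hIH ?_
            have hnn : (0:ℝ) ≤ (((T / M : ℕ)) : ℝ) ^ q := Real.rpow_nonneg (Nat.cast_nonneg _) _
            exact mul_le_mul (hFle j hj) h2 hnn hC0pos.le
          calc 3 * ((cnt (u.erase j) k M (T / M)).card : ℝ)
              ≤ 3 * (C0 * ((T:ℝ) ^ q * (M:ℝ) ^ (-q))) := by linarith
            _ = 3 * C0 * (T:ℝ) ^ q * (M:ℝ) ^ (-q) := by ring
        refine le_trans (Finset.sum_le_sum hterm) ?_
        rw [← Finset.mul_sum]
        have htail := tail_sum hq1 m₀ hm1 T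
        have hA : (m₀:ℝ) ^ (1-q) ≤ 2 ^ (q-1) * x ^ (1-q) := by
          have h1 : (m₀:ℝ) ^ (1-q) ≤ (x/2) ^ (1-q) := by
            apply Real.rpow_le_rpow_of_nonpos (by positivity) ?_ (by linarith)
            linarith
          have h2 : (x/2) ^ (1-q) = 2 ^ (q-1) * x ^ (1-q) := by
            rw [Real.div_rpow hxpos.le (by norm_num), show (1:ℝ)-q = -(q-1) by ring,
              Real.rpow_neg (by norm_num : (0:ℝ) ≤ 2), div_eq_mul_inv, inv_inv, mul_comm]
          rw [h2] at h1
          exact h1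
        have hTq0 : (0:ℝ) ≤ 3 * C0 * (T:ℝ) ^ q :=
          mul_nonneg (mul_nonneg (by norm_num) hC0pos.le) (Real.rpow_nonneg hT0.le _)
        calc 3 * C0 * (T:ℝ) ^ q * (∑ M ∈ Finset.Ioc m₀ T, ((M:ℝ)) ^ (-q))
            ≤ 3 * C0 * (T:ℝ) ^ q * ((m₀:ℝ) ^ (1-q) / (q-1)) :=
              mul_le_mul_of_nonneg_left htail hTq0
          _ ≤ 3 * C0 * (T:ℝ) ^ q * ((2 ^ (q-1) * x ^ (1-q)) / (q-1)) := by
              apply mul_le_mul_of_nonneg_left _ hTq0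
              exact div_le_div_of_nonneg_right hA (by linarith)
          _ = 3 * C0 * (2 ^ (q-1) / (q-1)) * ((T:ℝ) ^ q * x ^ (1-q)) := by ring
          _ = 3 * C0 * (2 ^ (q-1) / (q-1)) * Y := by rw [hTY]
      have hBY : B * Y = 3 * 3 ^ e * Y + 3 * C0 * (2 ^ (q-1) / (q-1)) * Y := by
        rw [hB]; ring
      rw [hBY]
      exact add_le_add hpart1 hpart2
    refine le_trans (Finset.sum_le_card_nsmul u _ (B * Y) hperj) ?_
    rw [nsmul_eq_mul]

lemma lower_count (r : ℕ) (hr : 1 ≤ r) (hrd : r ≤ d) (T : ℕ) (hT : 1 ≤ T) :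
    T ^ d ≤ (cnt (Finset.univ : Finset (Fin d)) r T T).card ^ r := by
  obtain ⟨m₀, hm1, hm2, hm3, hm4⟩ := root_spec r T hr hT
  have hbox : Fintype.piFinset (fun _ : Fin d => Finset.Icc (-(m₀:ℤ)) (m₀:ℤ))
      ⊆ cnt (Finset.univ : Finset (Fin d)) r T T := by
    intro m hm
    rw [Fintype.mem_piFinset] at hm
    rw [mem_cnt]
    constructor
    · intro i
      simp only [Finset.mem_univ, if_true]
      have h1 := hm i
      rw [Finset.mem_Icc] at h1 ⊢
      have hmT : (m₀:ℤ) ≤ (T:ℤ) := by exact_mod_cast hm4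
      omega
    · apply Finset.sup_le
      intro s hs
      rw [Finset.mem_powersetCard] at hs
      have hb : ∀ i ∈ s, max (m i).natAbs 1 ≤ m₀ := by
        intro i _
        have h1 := hm i
        rw [Finset.mem_Icc] at h1
        omega
      calc ∏ i ∈ s, max (m i).natAbs 1 ≤ m₀ ^ s.card :=
            Finset.prod_le_pow_card _ _ _ hb
        _ = m₀ ^ r := by rw [hs.2]
        _ ≤ T := hm2
  have hcard : (m₀ + 1) ^ d ≤ (cnt (Finset.univ : Finset (Fin d)) r T T).card := by
    calc (m₀+1)^d ≤ (2*m₀+1)^d := Nat.pow_le_pow_left (by omega) d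
      _ = (Fintype.piFinset (fun _ : Fin d => Finset.Icc (-(m₀:ℤ)) (m₀:ℤ))).card := by
          rw [Fintype.card_piFinset]
          rw [Finset.prod_const, Finset.card_univ, Fintype.card_fin]
          congr 1
          rw [Int.card_Icc]
          omega
      _ ≤ _ := Finset.card_le_card hbox
  calc T ^ d ≤ ((m₀+1)^r)^d := Nat.pow_le_pow_left (by omega) d
    _ = ((m₀+1)^d)^r := by rw [← pow_mul, ← pow_mul, Nat.mul_comm]
    _ ≤ (cnt (Finset.univ : Finset (Fin d)) r T T).card ^ r :=
        Nat.pow_le_pow_left hcard r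

end Aux


/-- If `σ : ℕ → ℤ^d` is semi-hyperbolic of order `r` (a bijection consistent with `H_{d,r}`),
then `H_{d,r}(σ(n)) ≍ n^{r/d}`. -/
theorem stmt10 (d r : ℕ) (hr : 1 ≤ r) (hrd : r ≤ d - 1) (σ : ℕ+ → (Fin d → ℤ))
    (hbij : Function.Bijective σ)
    (hcons : ∀ a b : ℕ+, Hdr d r (σ a) < Hdr d r (σ b) → a < b) :
    ∃ C₁ > (0 : ℝ), ∃ C₂ > (0 : ℝ), ∀ n : ℕ+,
      C₁ * ((n : ℕ) : ℝ) ^ ((r : ℝ) / d) ≤ (Hdr d r (σ n) : ℝ) ∧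
      (Hdr d r (σ n) : ℝ) ≤ C₂ * ((n : ℕ) : ℝ) ^ ((r : ℝ) / d) := by
  classical
  have hd2 : 2 ≤ d := by omega
  have hrd' : r < d := by omega
  have hcuniv : ((Finset.univ : Finset (Fin d)).card) = d := by
    rw [Finset.card_univ, Fintype.card_fin]
  have hHdr : ∀ m : Fin d → ℤ, Hdr d r m = Aux.Hsub r (Finset.univ : Finset (Fin d)) m :=
    fun m => rfl
  obtain ⟨C, hCpos, hCb⟩ := Aux.upper_count r hr (Finset.univ : Finset (Fin d))
    (by rw [hcuniv]; exact hrd')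
  have hd0 : (d:ℝ) ≠ 0 := by positivity
  have hr0 : (r:ℝ) ≠ 0 := by
    have : (0:ℝ) < r := by exact_mod_cast hr
    positivity
  have hdpos : (0:ℝ) < d := by positivity
  have hrpos : (0:ℝ) < r := by exact_mod_cast hr
  refine ⟨(C ^ ((r:ℝ)/d))⁻¹, by positivity, 2, by norm_num, fun n => ?_⟩
  set h : ℕ := Hdr d r (σ n) with hh
  have hh1 : 1 ≤ h := by
    rw [hh, hHdr]
    exact Aux.one_le_Hsub (by rw [hcuniv]; omega) _
  have hnpos : 1 ≤ (n:ℕ) := n.2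
  have hn0 : (0:ℝ) < ((n:ℕ):ℝ) := by exact_mod_cast hnpos
  have hnr1 : (1:ℝ) ≤ ((n:ℕ):ℝ) ^ ((r:ℝ)/d) := by
    rw [show (1:ℝ) = (1:ℝ) ^ ((r:ℝ)/d) by rw [Real.one_rpow]]
    apply Real.rpow_le_rpow (by norm_num) (by exact_mod_cast hnpos) (by positivity)
  -- (i) n ≤ N h
  have hcount1 : (n:ℕ) ≤ (Aux.cnt (Finset.univ : Finset (Fin d)) r h h).card := by
    have hsub : Finset.image (fun i : ℕ => σ (⟨i+1, Nat.succ_pos i⟩ : ℕ+)) (Finset.range (n:ℕ))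
        ⊆ Aux.cnt (Finset.univ : Finset (Fin d)) r h h := by
      intro y hy
      obtain ⟨i, hi, rfl⟩ := Finset.mem_image.mp hy
      rw [Finset.mem_range] at hi
      set b : ℕ+ := ⟨i+1, Nat.succ_pos i⟩ with hb
      have hbn : b ≤ n := by
        rw [← PNat.coe_le_coe]
        show i + 1 ≤ (n:ℕ); omega
      have hHb : Hdr d r (σ b) ≤ h := by
        by_contra hlt
        push_neg at hlt
        exact absurd hbn (not_le.mpr (hcons n b hlt))
      rw [Aux.mem_cnt]
      constructor
      · intro j
        simp only [Finset.mem_univ, if_true]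
        have h1 : max ((σ b) j).natAbs 1 ≤ Hdr d r (σ b) := by
          rw [hHdr]
          exact Aux.coord_le_Hsub hr (by rw [hcuniv]; omega) (Finset.mem_univ j) _
        have hcoord : ((σ b) j).natAbs ≤ h :=
          le_trans (le_trans (le_max_left _ _) h1) hHb
        rw [Finset.mem_Icc]
        omega
      · rw [← hHdr]; exact hHb
    have hinj : (Finset.image (fun i : ℕ => σ (⟨i+1, Nat.succ_pos i⟩ : ℕ+))
        (Finset.range (n:ℕ))).card = (n:ℕ) := by
      rw [Finset.card_image_of_injOn, Finset.card_range]
      intro a _ b _ heq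
      have := hbij.1 heq
      have : a + 1 = b + 1 := congrArg (fun x : ℕ+ => (x:ℕ)) this
      omega
    calc (n:ℕ) = _ := hinj.symm
      _ ≤ _ := Finset.card_le_card hsub
  -- (ii) N (h-1) ≤ n - 1
  have hcount2 : (Aux.cnt (Finset.univ : Finset (Fin d)) r (h-1) (h-1)).card ≤ (n:ℕ) - 1 := by
    set E := Equiv.ofBijective σ hbij with hE
    have hmap : ∀ m ∈ Aux.cnt (Finset.univ : Finset (Fin d)) r (h-1) (h-1),
        ((E.symm m : ℕ+) : ℕ) - 1 ∈ Finset.range ((n:ℕ) - 1) := by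
      intro m hm
      rw [Aux.mem_cnt] at hm
      have hHm : Hdr d r m ≤ h - 1 := by rw [hHdr]; exact hm.2
      have hσ : σ (E.symm m) = m := E.apply_symm_apply m
      have hlt : (E.symm m) < n := by
        apply hcons
        rw [hσ, ← hh]
        omega
      rw [← PNat.coe_lt_coe] at hlt
      have h1 : 1 ≤ ((E.symm m : ℕ+) : ℕ) := (E.symm m).2
      rw [Finset.mem_range]
      omega
    have hinj2 : Set.InjOn (fun m => ((E.symm m : ℕ+) : ℕ) - 1)
        (Aux.cnt (Finset.univ : Finset (Fin d)) r (h-1) (h-1)) := by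
      intro m1 _ m2 _ heq
      simp only at heq
      have h1 : 1 ≤ ((E.symm m1 : ℕ+) : ℕ) := (E.symm m1).2
      have h2 : 1 ≤ ((E.symm m2 : ℕ+) : ℕ) := (E.symm m2).2
      have : ((E.symm m1 : ℕ+) : ℕ) = ((E.symm m2 : ℕ+) : ℕ) := by omega
      have : E.symm m1 = E.symm m2 := PNat.coe_injective this
      have := congrArg E this
      rwa [E.apply_symm_apply, E.apply_symm_apply] at this
    calc (Aux.cnt (Finset.univ : Finset (Fin d)) r (h-1) (h-1)).card
        ≤ (Finset.range ((n:ℕ) - 1)).card := Finset.card_le_card_of_injOn _ hmap hinj2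
      _ = (n:ℕ) - 1 := Finset.card_range _
  constructor
  · -- lower bound
    have hN := hCb h h hh1
    rw [hcuniv] at hN
    have hn_le : ((n:ℕ):ℝ) ≤ C * ((h:ℕ):ℝ) ^ ((d:ℝ)/r) := by
      refine le_trans ?_ hN
      exact_mod_cast hcount1
    have hh0 : (0:ℝ) < (h:ℝ) := by exact_mod_cast hh1
    have hkey : ((n:ℕ):ℝ) / C ≤ ((h:ℕ):ℝ) ^ ((d:ℝ)/r) := by
      rw [div_le_iff₀ hCpos]
      linarith [hn_le]
    have hmono := Real.rpow_le_rpow (by positivity) hkey (by positivity : (0:ℝ) ≤ (r:ℝ)/d)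
    rw [← Real.rpow_mul hh0.le] at hmono
    rw [show ((d:ℝ)/r) * ((r:ℝ)/d) = 1 by field_simp, Real.rpow_one] at hmono
    rw [Real.div_rpow hn0.le hCpos.le] at hmono
    rw [div_eq_mul_inv, mul_comm] at hmono
    exact hmono
  · -- upper bound
    rcases Nat.lt_or_ge h 2 with hcase | hcase
    · have : h = 1 := by omega
      rw [this]
      push_cast
      linarith [hnr1]
    · have hg1 : 1 ≤ h - 1 := by omega
      have hlow := Aux.lower_count (d := d) r hr (by omega : r ≤ d) (h-1) hg1
      have hchain : (h-1)^d ≤ (n:ℕ)^r := by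
        calc (h-1)^d ≤ (Aux.cnt (Finset.univ : Finset (Fin d)) r (h-1) (h-1)).card ^ r := hlow
          _ ≤ ((n:ℕ) - 1) ^ r := Nat.pow_le_pow_left hcount2 r
          _ ≤ (n:ℕ) ^ r := Nat.pow_le_pow_left (by omega) r
      have hchainR : (((h-1:ℕ)):ℝ) ^ (d:ℕ) ≤ (((n:ℕ)):ℝ) ^ (r:ℕ) := by exact_mod_cast hchain
      have hg0 : (0:ℝ) < ((h-1:ℕ):ℝ) := by exact_mod_cast hg1
      have hgle : ((h-1:ℕ):ℝ) ≤ ((n:ℕ):ℝ) ^ ((r:ℝ)/d) := by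
        have hmono := Real.rpow_le_rpow (by positivity) hchainR
          (by positivity : (0:ℝ) ≤ 1/(d:ℝ))
        rw [← Real.rpow_natCast (((h-1:ℕ)):ℝ) d, ← Real.rpow_natCast (((n:ℕ)):ℝ) r,
          ← Real.rpow_mul hg0.le, ← Real.rpow_mul hn0.le] at hmono
        rw [show ((d:ℝ)) * (1/(d:ℝ)) = 1 by field_simp, Real.rpow_one] at hmono
        rw [show ((r:ℝ)) * (1/(d:ℝ)) = (r:ℝ)/d by ring] at hmono
        exact hmono
      have hcast : ((h:ℕ):ℝ) ≤ ((h-1:ℕ):ℝ) + 1 := by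
        push_cast [Nat.cast_sub (by omega : 1 ≤ h)]
        linarith
      calc ((h:ℕ):ℝ) ≤ ((h-1:ℕ):ℝ) + 1 := hcast
        _ ≤ ((n:ℕ):ℝ) ^ ((r:ℝ)/d) + ((n:ℕ):ℝ) ^ ((r:ℝ)/d) := by
            apply add_le_add hgle hnr1
        _ = 2 * ((n:ℕ):ℝ) ^ ((r:ℝ)/d) := by ring
end

section
/- For integers 1 ≤ r ≤ r' ≤ d and all n ∈ ℤ^d, the inequality H_{d,r'}(n)^r ≤ H_{d,r}(n)^{r'} holds. -/
lemma Hdr_step (d k : ℕ) (hk : k + 1 ≤ d) (n : Fin d → ℤ) :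
    Hdr d (k + 1) n ^ k ≤ Hdr d k n ^ (k + 1) := by
  set a : Fin d → ℕ := fun i => max (n i).natAbs 1 with ha
  have hne : ((Finset.univ : Finset (Fin d)).powersetCard (k + 1)).Nonempty := by
    rw [Finset.powersetCard_nonempty]; simpa using hk
  obtain ⟨s, hs, hsup⟩ := Finset.exists_mem_eq_sup _ hne
      (fun s => ∏ i ∈ s, max (n i).natAbs 1)
  have hscard : s.card = k + 1 := (Finset.mem_powersetCard.mp hs).2
  have hHdr : Hdr d (k + 1) n = ∏ i ∈ s, a i := hsup
  rw [hHdr]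
  have hP : 0 < ∏ i ∈ s, a i :=
    Finset.prod_pos fun i _ => lt_of_lt_of_le one_pos (le_max_right _ _)
  have key : (∏ i ∈ s, a i) * ∏ i ∈ s, ∏ j ∈ s.erase i, a j
      = (∏ i ∈ s, a i) * (∏ i ∈ s, a i) ^ k := by
    calc (∏ i ∈ s, a i) * ∏ i ∈ s, ∏ j ∈ s.erase i, a j
        = ∏ i ∈ s, (a i * ∏ j ∈ s.erase i, a j) := (Finset.prod_mul_distrib).symm
      _ = ∏ i ∈ s, ∏ j ∈ s, a j :=
          Finset.prod_congr rfl fun i hi => Finset.mul_prod_erase s a hi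
      _ = (∏ j ∈ s, a j) ^ (k + 1) := by rw [Finset.prod_const, hscard]
      _ = (∏ i ∈ s, a i) * (∏ i ∈ s, a i) ^ k := by ring
  have hX : (∏ i ∈ s, a i) ^ k = ∏ i ∈ s, ∏ j ∈ s.erase i, a j :=
    (Nat.eq_of_mul_eq_mul_left hP key).symm
  rw [hX]
  have hle : ∀ i ∈ s, (∏ j ∈ s.erase i, a j) ≤ Hdr d k n := by
    intro i hi
    apply Finset.le_sup (f := fun t => ∏ j ∈ t, max (n j).natAbs 1)
    rw [Finset.mem_powersetCard]
    refine ⟨Finset.subset_univ _, ?_⟩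
    rw [Finset.card_erase_of_mem hi, hscard]
    omega
  calc ∏ i ∈ s, ∏ j ∈ s.erase i, a j ≤ ∏ i ∈ s, Hdr d k n :=
        Finset.prod_le_prod' hle
    _ = Hdr d k n ^ (k + 1) := by rw [Finset.prod_const, hscard]

/-- For `1 ≤ r ≤ r' ≤ d` and all `n ∈ ℤ^d`, `H_{d,r'}(n)^r ≤ H_{d,r}(n)^{r'}`. -/
theorem stmt11 (d r r' : ℕ) (hr : 1 ≤ r) (hrr' : r ≤ r') (hr'd : r' ≤ d) (n : Fin d → ℤ) :
    Hdr d r' n ^ r ≤ Hdr d r n ^ r' := by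
  revert hr'd
  induction r', hrr' using Nat.le_induction with
  | base => intro _; exact le_refl _
  | succ k hk ih =>
    intro h
    have ih' := ih (by omega)
    have hstep := Hdr_step d k h n
    have hkpos : k ≠ 0 := by omega
    rw [← Nat.pow_le_pow_iff_left hkpos]
    calc (Hdr d (k + 1) n ^ r) ^ k = (Hdr d (k + 1) n ^ k) ^ r := by
          rw [← pow_mul, ← pow_mul, Nat.mul_comm]
      _ ≤ (Hdr d k n ^ (k + 1)) ^ r := Nat.pow_le_pow_left hstep r
      _ = (Hdr d k n ^ r) ^ (k + 1) := by rw [← pow_mul, ← pow_mul, Nat.mul_comm]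
      _ ≤ (Hdr d r n ^ k) ^ (k + 1) := Nat.pow_le_pow_left ih' (k + 1)
      _ = (Hdr d r n ^ (k + 1)) ^ k := by rw [← pow_mul, ← pow_mul, Nat.mul_comm]
end

section
/- Let U be an isometry on ℓ²(ℕ) (i.e., U*U = I) and let Q_N denote the orthogonal projection onto the coordinates indexed by {N, N+1, N+2, …}. Define μ(Q_N U) = sup_{i ≥ N, j ≥ 1} |U_{ij}|². Then the series Σ_{N=1}^∞ μ(Q_N U) diverges. -/
set_option maxHeartbeats 1000000


/-- If `U` is an isometry on `ℓ²(ℕ)` and `μ(Q_N U) = sup_{i ≥ N, j} |U_{ij}|²`, then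
`Σ_N μ(Q_N U)` diverges. -/
theorem stmt12 (U : lp (fun _ : ℕ => ℂ) 2 →ₗᵢ[ℂ] lp (fun _ : ℕ => ℂ) 2) :
    ¬ Summable (fun N : ℕ =>
      ⨆ i : {i : ℕ // N ≤ i}, ⨆ j : ℕ, ‖(U (lp.single 2 j 1) : ∀ _ : ℕ, ℂ) i‖ ^ 2) := by
  intro hsum
  set e : ℕ → lp (fun _ : ℕ => ℂ) 2 := fun j => lp.single 2 j 1 with he
  set c : ℕ → ℕ → ℝ := fun i j => ‖(U (e j) : ∀ _ : ℕ, ℂ) i‖ ^ 2 with hc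
  set a : ℕ → ℝ := fun N =>
      ⨆ i : {i : ℕ // N ≤ i}, ⨆ j : ℕ, ‖(U (lp.single 2 j 1) : ∀ _ : ℕ, ℂ) i‖ ^ 2 with ha
  have hp2 : (0:ℝ) < (2 : ENNReal).toReal := by norm_num
  -- norms of e j
  have he_norm : ∀ j, ‖e j‖ = 1 := by
    intro j
    have := lp.norm_single (E := fun _ : ℕ => ℂ) (p := 2) (by norm_num) j (1:ℂ)
    exact this.trans (by simp)
  have hUe_norm : ∀ j, ‖U (e j)‖ = 1 := fun j => by rw [U.norm_map]; exact he_norm j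
  -- each entry is at most 1
  have hc_le_one : ∀ i j, c i j ≤ 1 := by
    intro i j
    have h1 : ‖(U (e j) : ∀ _ : ℕ, ℂ) i‖ ≤ ‖U (e j)‖ :=
      lp.norm_apply_le_norm (by norm_num) (U (e j)) i
    rw [hUe_norm j] at h1
    have := pow_le_one₀ (norm_nonneg _) h1 (n := 2)
    simpa [hc] using this
  have hc_nonneg : ∀ i j, 0 ≤ c i j := fun i j => by positivity
  -- inner sup bounded
  have hbdd_inner : ∀ i : ℕ, BddAbove (Set.range fun j => c i j) := by
    intro i
    exact ⟨1, by rintro x ⟨j, rfl⟩; exact hc_le_one i j⟩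
  have hsup_le_one : ∀ i : ℕ, (⨆ j, c i j) ≤ 1 := fun i =>
    ciSup_le fun j => hc_le_one i j
  -- entry ≤ a i
  have hub : ∀ i j, c i j ≤ a i := by
    intro i j
    have h1 : c i j ≤ ⨆ j, c i j := le_ciSup (hbdd_inner i) j
    have h2 : (⨆ j, c i j) ≤ a i := by
      refine le_ciSup_of_le ?_ (⟨i, le_rfl⟩ : {i' : ℕ // i ≤ i'}) le_rfl
      exact ⟨1, by rintro x ⟨i', rfl⟩; exact hsup_le_one i'⟩
    exact h1.trans h2
  have ha_nonneg : ∀ N, 0 ≤ a N := fun N => (hc_nonneg N 0).trans (hub N 0)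
  -- orthonormality of the columns
  have hone : Orthonormal ℂ e := by
    rw [orthonormal_iff_ite]
    intro i j
    rw [he]
    rw [lp.inner_single_left]
    by_cases h : i = j
    · subst h
      simp [lp.single_apply_self]
    · have h0 : (lp.single 2 j (1:ℂ) : ∀ _:ℕ, ℂ) i = 0 := lp.single_apply_ne 2 j 1 h
      simp [h0, h]
  have honU : Orthonormal ℂ (fun j => U (e j)) := hone.comp_linearIsometry U
  -- row bound : for each i, finite sums of c i j over j are ≤ 1
  have hrow : ∀ (i : ℕ) (s : Finset ℕ), ∑ j ∈ s, c i j ≤ 1 := by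
    intro i s
    have hb := honU.sum_inner_products_le (s := s) (e i)
    have hrw : ∀ j, ‖(inner ℂ (U (e j)) (e i) : ℂ)‖ ^ 2 = c i j := by
      intro j
      have : (inner ℂ (e i) (U (e j)) : ℂ) = (U (e j) : ∀ _ : ℕ, ℂ) i := by
        rw [he]
        rw [lp.inner_single_left]
        simp [RCLike.inner_apply]
      rw [← norm_inner_symm]
      rw [this]
    calc ∑ j ∈ s, c i j = ∑ j ∈ s, ‖(inner ℂ (U (e j)) (e i) : ℂ)‖ ^ 2 := by
          exact Finset.sum_congr rfl fun j _ => (hrw j).symm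
      _ ≤ ‖e i‖ ^ 2 := hb
      _ = 1 := by rw [he_norm i]; norm_num
  -- column sums: HasSum (c · j) 1
  have hcol : ∀ j, HasSum (fun i => c i j) 1 := by
    intro j
    have h := lp.hasSum_norm hp2 (U (e j))
    rw [hUe_norm j] at h
    have h2 : (fun i => ‖(U (e j) : ∀ _ : ℕ, ℂ) i‖ ^ ENNReal.toReal 2) = fun i => c i j := by
      funext i
      have ht : ENNReal.toReal 2 = (2:ℝ) := by norm_num
      rw [ht, Real.rpow_two]
    rw [h2] at h
    simpa using h
  -- get N ≥ 1 with small tail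
  have htail : Filter.Tendsto (fun N => ∑' k, a (k + N)) Filter.atTop (nhds 0) :=
    tendsto_sum_nat_add a
  have hev : ∀ᶠ N in Filter.atTop, ∑' k, a (k + N) < 1/2 :=
    htail.eventually (Filter.Tendsto.eventually_lt_const (by norm_num) Filter.tendsto_id)
  obtain ⟨N, hN1, hNtail⟩ : ∃ N, 1 ≤ N ∧ ∑' k, a (k + N) < 1/2 := by
    rcases (hev.and (Filter.eventually_ge_atTop 1)).exists with ⟨N, h1, h2⟩
    exact ⟨N, h2, h1⟩
  -- find a column j < 2N with small head
  have hdouble : ∑ j ∈ Finset.range (2*N), ∑ i ∈ Finset.range N, c i j ≤ (N : ℝ) := by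
    rw [Finset.sum_comm]
    calc ∑ i ∈ Finset.range N, ∑ j ∈ Finset.range (2*N), c i j
        ≤ ∑ i ∈ Finset.range N, 1 := Finset.sum_le_sum fun i _ => hrow i _
      _ = (N : ℝ) := by simp
  obtain ⟨j, hjhead⟩ : ∃ j, ∑ i ∈ Finset.range N, c i j ≤ 1/2 := by
    by_contra hcon
    push_neg at hcon
    have : (N : ℝ) < ∑ j ∈ Finset.range (2*N), ∑ i ∈ Finset.range N, c i j := by
      calc (N : ℝ) = ∑ _j ∈ Finset.range (2*N), (1/2 : ℝ) := by
            rw [Finset.sum_const]; push_cast; ring_nf; simp [mul_comm]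
        _ < _ := by
            refine Finset.sum_lt_sum_of_nonempty ?_ fun j _ => hcon j
            simp [Finset.nonempty_range_iff]; omega
    linarith
  -- column tail is large
  have hcolsum : Summable (fun i => c i j) := (hcol j).summable
  have hsplit : ∑ i ∈ Finset.range N, c i j + ∑' k, c (k + N) j = 1 := by
    rw [Summable.sum_add_tsum_nat_add N hcolsum]
    exact (hcol j).tsum_eq
  have hcoltail : 1/2 ≤ ∑' k, c (k + N) j := by linarith
  -- compare with tail of a
  have hacomp : ∑' k, c (k + N) j ≤ ∑' k, a (k + N) := by
    refine Summable.tsum_le_tsum (fun k => hub (k + N) j) ?_ ?_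
    · exact (summable_nat_add_iff N).2 hcolsum
    · exact (summable_nat_add_iff N).2 hsum
  linarith
end

section
/- If U is an isometry on ℓ²(ℕ), then there is no ε > 0 such that μ(Q_N U) = O(N^{−1−ε}) as N → ∞, where μ(Q_N U) = sup_{i ≥ N, j ≥ 1} |U_{ij}|². -/
open scoped ComplexConjugate ENNReal

local notation "𝓗" => lp (fun _ : ℕ => ℂ) 2

lemma aux13_orthonormal_single : Orthonormal ℂ (fun j : ℕ => lp.single 2 j (1 : ℂ)) := by
  rw [orthonormal_iff_ite]
  intro i j
  rw [lp.inner_single_left]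
  rcases eq_or_ne i j with rfl | h
  · simp [lp.single_apply_self, RCLike.inner_apply]
  · simp [lp.single_apply_ne _ _ _ h, RCLike.inner_apply, h]

set_option maxHeartbeats 1600000 in
/-- If `U` is an isometry on `ℓ²(ℕ)` then there is no `ε > 0` with
`μ(Q_N U) = O(N^{−1−ε})`. -/
theorem stmt13 (U : lp (fun _ : ℕ => ℂ) 2 →ₗᵢ[ℂ] lp (fun _ : ℕ => ℂ) 2) :
    ¬ ∃ ε > (0 : ℝ), ∃ C : ℝ, ∀ N : ℕ, 1 ≤ N →
      (⨆ i : {i : ℕ // N ≤ i}, ⨆ j : ℕ, ‖(U (lp.single 2 j 1) : ∀ _ : ℕ, ℂ) i‖ ^ 2) ≤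
        C * (N : ℝ) ^ (-(1 + ε)) := by
  rintro ⟨ε, hε, C, hC⟩
  set f : ℕ → ℕ → ℝ := fun j i => ‖(U (lp.single 2 j 1) : ∀ _ : ℕ, ℂ) i‖ ^ 2 with hf
  have hfnn : ∀ j i, 0 ≤ f j i := fun j i => sq_nonneg _
  have hp2 : (0 : ℝ) < (2 : ℝ≥0∞).toReal := by norm_num
  have h2 : ((2 : ℝ≥0∞)).toReal = ((2 : ℕ) : ℝ) := by norm_num
  -- norm of each column is 1
  have hnorm : ∀ j : ℕ, ‖U (lp.single 2 j (1 : ℂ))‖ = 1 := by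
    intro j
    rw [U.norm_map]
    simpa using lp.norm_single hp2 (fun _ : ℕ => (1 : ℂ)) j
  -- columns are summable with sum 1
  have hsummable : ∀ j : ℕ, Summable (f j) := by
    intro j
    have := (lp.memℓp (U (lp.single 2 j (1 : ℂ)))).summable hp2
    simpa [hf, h2, Real.rpow_natCast] using this
  have htsum : ∀ j : ℕ, ∑' i, f j i = 1 := by
    intro j
    have := lp.norm_rpow_eq_tsum hp2 (U (lp.single 2 j (1 : ℂ)))
    rw [hnorm j] at this
    simpa [hf, h2, Real.rpow_natCast] using this.symm
  have hub : ∀ j i, f j i ≤ 1 := by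
    intro j i
    calc f j i ≤ ∑' i, f j i := Summable.le_tsum (hsummable j) i (fun k _ => hfnn j k)
    _ = 1 := htsum j
  -- Bessel: rows have ℓ² norm at most 1
  have hON : Orthonormal ℂ (U ∘ fun j : ℕ => lp.single 2 j (1 : ℂ)) :=
    aux13_orthonormal_single.comp_linearIsometry U
  have hrow : ∀ i : ℕ, ∀ s : Finset ℕ, ∑ j ∈ s, f j i ≤ 1 := by
    intro i s
    have hsumm := hON.inner_products_summable ((lp.single 2 i (1 : ℂ)) : lp (fun _ : ℕ => ℂ) 2)
    have hle := hON.tsum_inner_products_le ((lp.single 2 i (1 : ℂ)) : lp (fun _ : ℕ => ℂ) 2)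
    simp only [Function.comp_apply, lp.inner_single_right, RCLike.inner_apply, mul_one, one_mul,
      RCLike.norm_conj] at hsumm hle
    have h1 : ‖(lp.single 2 i (1 : ℂ) : lp (fun _ : ℕ => ℂ) 2)‖ = 1 := by
      simpa using lp.norm_single hp2 (fun _ : ℕ => (1 : ℂ)) i
    rw [h1, one_pow] at hle
    exact (Summable.sum_le_tsum s (fun k _ => hfnn k i) hsumm).trans hle
  -- pointwise decay from the hypothesis
  have hdecay : ∀ j i : ℕ, 1 ≤ i → f j i ≤ C * (i : ℝ) ^ (-(1 + ε)) := by
    intro j i hi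
    have hbdd1 : ∀ i' : ℕ, BddAbove (Set.range fun j : ℕ => f j i') := by
      intro i'
      exact ⟨1, by rintro _ ⟨j', rfl⟩; exact hub j' i'⟩
    have h1 : f j i ≤ ⨆ j' : ℕ, f j' i := le_ciSup (hbdd1 i) j
    have hbdd2 : BddAbove (Set.range fun i' : {i' : ℕ // i ≤ i'} => ⨆ j' : ℕ, f j' i') := by
      refine ⟨1, ?_⟩
      rintro _ ⟨i', rfl⟩
      exact ciSup_le fun j' => hub j' i'
    have h2' : (⨆ j' : ℕ, f j' i)
        ≤ ⨆ i' : {i' : ℕ // i ≤ i'}, ⨆ j' : ℕ, f j' i' :=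
      le_ciSup hbdd2 ⟨i, le_refl i⟩
    exact (h1.trans h2').trans (hC i hi)
  -- the dominating tail tends to 0
  set g : ℕ → ℝ := fun n => C * (n : ℝ) ^ (-(1 + ε)) with hg
  have hgsum : Summable g := by
    apply Summable.mul_left
    rw [Real.summable_nat_rpow]
    linarith
  have htail : Filter.Tendsto (fun N => ∑' k, g (k + N)) Filter.atTop (nhds 0) :=
    tendsto_sum_nat_add g
  obtain ⟨N₀, hN₀⟩ := Filter.eventually_atTop.mp
    (htail.eventually_le_const (by norm_num : (0:ℝ) < 1/4))
  set N := max N₀ 1 with hN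
  have hN1 : 1 ≤ N := le_max_right _ _
  have hN1' : (0:ℝ) < N := by exact_mod_cast Nat.lt_of_lt_of_le Nat.zero_lt_one hN1
  have htailN : (∑' k, g (k + N)) ≤ 1/4 := hN₀ N (le_max_left _ _)
  -- each column puts mass ≥ 3/4 in the first N coordinates
  have hcol : ∀ j : ℕ, (3:ℝ)/4 ≤ ∑ i ∈ Finset.range N, f j i := by
    intro j
    have hsplit := Summable.sum_add_tsum_nat_add (f := f j) N (hsummable j)
    rw [htsum j] at hsplit
    have htail_j : (∑' k, f j (k + N)) ≤ ∑' k, g (k + N) := by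
      refine Summable.tsum_le_tsum (fun k => hdecay j (k + N) (by omega)) ?_ ?_
      · exact ((summable_nat_add_iff N).mpr (hsummable j))
      · exact ((summable_nat_add_iff N).mpr hgsum)
    have := htail_j.trans htailN
    linarith
  -- double counting over j < 2N, i < N
  have hcount : (2 * N : ℝ) * (3/4) ≤ (N : ℝ) := by
    calc (2 * N : ℝ) * (3/4) = ∑ j ∈ Finset.range (2 * N), (3:ℝ)/4 := by
          simp [mul_comm]
      _ ≤ ∑ j ∈ Finset.range (2 * N), ∑ i ∈ Finset.range N, f j i :=
          Finset.sum_le_sum fun j _ => hcol j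
      _ = ∑ i ∈ Finset.range N, ∑ j ∈ Finset.range (2 * N), f j i :=
          Finset.sum_comm
      _ ≤ ∑ i ∈ Finset.range N, (1:ℝ) :=
          Finset.sum_le_sum fun i _ => hrow i _
      _ = (N : ℝ) := by simp
  nlinarith
end

section
/- Let f, g: ℕ → ℝ_{>0} be strictly positive decreasing functions with Σ_N f(N) = ∞. Then there exists an isometry U on ℓ²(ℕ) such that μ(Q_N U) ≤ f(N) and μ(U Q_N) ≤ g(N) for all N ∈ ℕ, where μ(Q_N U) = sup_{i ≥ N, j} |U_{ij}|² and μ(U Q_N) = sup_{i, j ≥ N} |U_{ij}|². -/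
open Filter Finset
open scoped ENNReal NNReal

private lemma tsum_blocks14 {s : ℕ → ℕ} (h0 : s 0 = 0) (hs : StrictMono s) (F : ℕ → ℝ≥0∞) :
    ∑' i, F i = ∑' j, ∑ i ∈ Finset.Ico (s j) (s (j+1)), F i := by
  have hcons : ∀ n, ∑ j ∈ Finset.range n, ∑ i ∈ Finset.Ico (s j) (s (j+1)), F i
      = ∑ i ∈ Finset.range (s n), F i := by
    intro n
    induction n with
    | zero => simp [h0]
    | succ n ih =>
      rw [Finset.sum_range_succ, ih]
      simp only [Finset.range_eq_Ico]
      exact Finset.sum_Ico_consecutive F (Nat.zero_le (s n)) (hs (Nat.lt_succ_self n)).le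
  rw [ENNReal.tsum_eq_iSup_nat' (hs.tendsto_atTop), ENNReal.tsum_eq_iSup_nat]
  congr 1
  funext n
  rw [hcons]

private lemma rpow_two14 (a : ℝ) : a ^ (2:ℝ) = a ^ (2:ℕ) := by
  rw [← Real.rpow_natCast a 2]; norm_num

private lemma memlp2_iff14 (y : ℕ → ℂ) :
    Memℓp y 2 ↔ (∑' i, ((‖y i‖₊ : ℝ≥0∞))^2) ≠ ⊤ := by
  rw [memℓp_gen_iff (p := 2) (by norm_num)]
  have h2 : (2 : ℝ≥0∞).toReal = 2 := by norm_num
  simp only [h2]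
  have hco : ∀ i : ℕ, ((‖y i‖₊ : ℝ≥0∞))^2 = ((‖y i‖₊ ^ 2 : ℝ≥0) : ℝ≥0∞) := by
    intro i; rw [ENNReal.coe_pow]
  simp only [hco]
  rw [ENNReal.tsum_coe_ne_top_iff_summable, ← NNReal.summable_coe]
  constructor
  · intro h
    refine h.congr fun i => ?_
    push_cast
    rw [rpow_two14]
  · intro h
    refine h.congr fun i => ?_
    push_cast
    rw [rpow_two14]

private lemma lp2_norm_sq14 (z : lp (fun _ : ℕ => ℂ) 2) :
    ‖z‖ ^ 2 = (∑' i, ((‖(z : ∀ _ : ℕ, ℂ) i‖₊ : ℝ≥0∞))^2).toReal := by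
  have hp : (0:ℝ) < (2 : ℝ≥0∞).toReal := by norm_num
  have h := lp.norm_rpow_eq_tsum hp z
  have h2 : (2 : ℝ≥0∞).toReal = 2 := by norm_num
  rw [h2] at h
  rw [rpow_two14] at h
  have hS : Summable fun i => (‖(z : ∀ _ : ℕ, ℂ) i‖₊ ^ 2 : ℝ≥0) := by
    have := (memlp2_iff14 _).1 (lp.memℓp z)
    simp only [← ENNReal.coe_pow] at this
    exact ENNReal.tsum_coe_ne_top_iff_summable.1 this
  have hcoe : (∑' i, ((‖(z : ∀ _ : ℕ, ℂ) i‖₊ : ℝ≥0∞))^2)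
      = ENNReal.ofNNReal (∑' i, ‖(z : ∀ _ : ℕ, ℂ) i‖₊ ^ 2) := by
    rw [ENNReal.coe_tsum hS]
    simp [ENNReal.coe_pow]
  rw [hcoe, ENNReal.coe_toReal, NNReal.coe_tsum]
  rw [h]
  congr 1
  funext i
  push_cast
  norm_num

/-- Given strictly positive decreasing `f, g : ℕ → ℝ` with `Σ f(N) = ∞`, there is an isometry
`U` on `ℓ²(ℕ)` with `μ(Q_N U) ≤ f(N)` and `μ(U Q_N) ≤ g(N)` for all `N`. -/
theorem stmt14 (f g : ℕ → ℝ) (hf0 : ∀ N, 0 < f N) (hg0 : ∀ N, 0 < g N)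
    (hfdec : Antitone f) (hgdec : Antitone g) (hdiv : ¬ Summable f) :
    ∃ U : lp (fun _ : ℕ => ℂ) 2 →ₗᵢ[ℂ] lp (fun _ : ℕ => ℂ) 2, ∀ N : ℕ,
      (⨆ i : {i : ℕ // N ≤ i}, ⨆ j : ℕ, ‖(U (lp.single 2 j 1) : ∀ _ : ℕ, ℂ) i‖ ^ 2) ≤ f N ∧
      (⨆ i : ℕ, ⨆ j : {j : ℕ // N ≤ j}, ‖(U (lp.single 2 (j : ℕ) 1) : ∀ _ : ℕ, ℂ) i‖ ^ 2) ≤ g N := by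
  classical
  -- nonsummability of the min with a constant
  have hmdiv : ∀ j : ℕ, ¬ Summable (fun i => min (f i) (g j)) := by
    intro j hsum
    by_cases hc : ∃ i0, f i0 < g j
    · obtain ⟨i0, hi0⟩ := hc
      apply hdiv
      rw [← summable_nat_add_iff i0]
      have h2 := (summable_nat_add_iff i0).2 hsum
      refine h2.congr fun i => ?_
      exact min_eq_left ((hfdec (Nat.le_add_left i0 i)).trans hi0.le)
    · push_neg at hc
      have heq : (fun i : ℕ => min (f i) (g j)) = fun _ => g j :=
        funext fun i => min_eq_right (hc i)
      rw [heq] at hsum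
      have h0 : g j = 0 := tendsto_nhds_unique tendsto_const_nhds hsum.tendsto_atTop_zero
      exact absurd h0 (hg0 j).ne'
  have hstep : ∀ a j : ℕ, ∃ b, a < b ∧ 1 ≤ ∑ i ∈ Finset.Ico a b, min (f i) (g j) := by
    intro a j
    have hT := (not_summable_iff_tendsto_nat_atTop_of_nonneg
      (fun i => le_min (hf0 i).le (hg0 j).le)).1 (hmdiv j)
    obtain ⟨b, hb1, hb2⟩ := ((hT.eventually_ge_atTop
      (∑ i ∈ Finset.range a, min (f i) (g j) + 1)).and (eventually_gt_atTop a)).exists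
    refine ⟨b, hb2, ?_⟩
    rw [Finset.sum_Ico_eq_sub _ hb2.le]
    linarith
  choose nxt hnxt hsum1 using hstep
  set s : ℕ → ℕ := fun n => Nat.rec 0 (fun j a => nxt a j) n with hs_def
  have hs0 : s 0 = 0 := rfl
  have hslt : ∀ j, s j < s (j+1) := fun j => hnxt (s j) j
  have hsmono : StrictMono s := strictMono_nat_of_lt_succ hslt
  have hTsum : ∀ j, 1 ≤ ∑ i ∈ Finset.Ico (s j) (s (j+1)), min (f i) (g j) :=
    fun j => hsum1 (s j) j
  set col : ℕ → ℕ := fun i => Nat.findGreatest (fun j => s j ≤ i) i with hcol_def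
  have hcol1 : ∀ i, s (col i) ≤ i := fun i =>
    Nat.findGreatest_spec (P := fun j => s j ≤ i) (m := 0) (Nat.zero_le i) (by simp [hs0])
  have hcol2 : ∀ i, i < s (col i + 1) := by
    intro i
    by_contra h
    push_neg at h
    have h1 : col i + 1 ≤ i := le_trans (hsmono.le_apply) h
    have h2 : col i + 1 ≤ col i := Nat.le_findGreatest (P := fun j => s j ≤ i) h1 h
    omega
  have hcol_eq : ∀ i j, s j ≤ i → i < s (j+1) → col i = j := by
    intro i j h1 h2
    rcases lt_trichotomy (col i) j with h | h | h
    · have : s (col i + 1) ≤ s j := hsmono.monotone (Nat.succ_le_of_lt h)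
      have := hcol2 i
      omega
    · exact h
    · have : s (j + 1) ≤ s (col i) := hsmono.monotone (Nat.succ_le_of_lt h)
      have := hcol1 i
      omega
  set T : ℕ → ℝ := fun j => ∑ i ∈ Finset.Ico (s j) (s (j+1)), min (f i) (g j) with hT_def
  have hT1 : ∀ j, 1 ≤ T j := hTsum
  set c : ℕ → ℝ := fun i => min (f i) (g (col i)) / T (col i) with hc_def
  have hmin0 : ∀ i, 0 ≤ min (f i) (g (col i)) := fun i => le_min (hf0 i).le (hg0 _).le
  have hc0 : ∀ i, 0 ≤ c i := fun i => div_nonneg (hmin0 i) (by linarith [hT1 (col i)])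
  have hcle : ∀ i, c i ≤ min (f i) (g (col i)) := fun i =>
    div_le_self (hmin0 i) (hT1 (col i))
  have hcsum : ∀ j, ∑ i ∈ Finset.Ico (s j) (s (j+1)), c i = 1 := by
    intro j
    have hcongr : ∀ i ∈ Finset.Ico (s j) (s (j+1)), c i = min (f i) (g j) / T j := by
      intro i hi
      rw [Finset.mem_Ico] at hi
      simp only [hc_def, hcol_eq i j hi.1 hi.2]
    rw [Finset.sum_congr rfl hcongr, ← Finset.sum_div]
    exact div_self (by linarith [hT1 j])
  -- the map on raw functions
  set A : (∀ _ : ℕ, ℂ) → (∀ _ : ℕ, ℂ) := fun x i => ((Real.sqrt (c i) : ℝ) : ℂ) * x (col i)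
    with hA_def
  have hsqrt_sq : ∀ i, ((‖((Real.sqrt (c i) : ℝ) : ℂ)‖₊ : ℝ≥0∞)) ^ 2 = ENNReal.ofReal (c i) := by
    intro i
    rw [← enorm_eq_nnnorm, ← ofReal_norm, ← ENNReal.ofReal_pow (norm_nonneg _)]
    congr 1
    rw [Complex.norm_real, Real.norm_eq_abs, abs_of_nonneg (Real.sqrt_nonneg _),
      Real.sq_sqrt (hc0 i)]
  have hkey : ∀ x : ∀ _ : ℕ, ℂ,
      ∑' i, ((‖A x i‖₊ : ℝ≥0∞)) ^ 2 = ∑' j, ((‖x j‖₊ : ℝ≥0∞)) ^ 2 := by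
    intro x
    rw [tsum_blocks14 hs0 hsmono]
    congr 1
    funext j
    have hterm : ∀ i ∈ Finset.Ico (s j) (s (j+1)),
        ((‖A x i‖₊ : ℝ≥0∞)) ^ 2 = ENNReal.ofReal (c i) * ((‖x j‖₊ : ℝ≥0∞)) ^ 2 := by
      intro i hi
      rw [Finset.mem_Ico] at hi
      have hci : col i = j := hcol_eq i j hi.1 hi.2
      simp only [hA_def, hci]
      rw [nnnorm_mul, ENNReal.coe_mul, mul_pow, hsqrt_sq]
    rw [Finset.sum_congr rfl hterm, ← Finset.sum_mul,
      ← ENNReal.ofReal_sum_of_nonneg (fun i _ => hc0 i), hcsum j, ENNReal.ofReal_one, one_mul]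
  have hmem : ∀ x : lp (fun _ : ℕ => ℂ) 2, Memℓp (A x) 2 := by
    intro x
    rw [memlp2_iff14, hkey]
    exact (memlp2_iff14 _).1 (lp.memℓp x)
  set Af : lp (fun _ : ℕ => ℂ) 2 → lp (fun _ : ℕ => ℂ) 2 := fun x => ⟨A x, hmem x⟩
    with hAf_def
  have hAf_apply : ∀ (x : lp (fun _ : ℕ => ℂ) 2) (i : ℕ),
      (Af x : ∀ _ : ℕ, ℂ) i = ((Real.sqrt (c i) : ℝ) : ℂ) * (x : ∀ _ : ℕ, ℂ) (col i) :=
    fun x i => rfl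
  have hnorm : ∀ x : lp (fun _ : ℕ => ℂ) 2, ‖Af x‖ = ‖x‖ := by
    intro x
    have h1 := lp2_norm_sq14 (Af x)
    have h2 := lp2_norm_sq14 x
    have h3 : ‖Af x‖ ^ 2 = ‖x‖ ^ 2 := by
      rw [h1, h2]
      congr 1
      exact hkey _
    rw [← Real.sqrt_sq (norm_nonneg (Af x)), h3, Real.sqrt_sq (norm_nonneg x)]
  set U0 : lp (fun _ : ℕ => ℂ) 2 →ₗ[ℂ] lp (fun _ : ℕ => ℂ) 2 :=
    { toFun := Af
      map_add' := by
        intro x y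
        ext i
        have h1 : (Af (x + y) : ∀ _ : ℕ, ℂ) i
            = ((Real.sqrt (c i) : ℝ) : ℂ)
              * ((x : ∀ _ : ℕ, ℂ) (col i) + (y : ∀ _ : ℕ, ℂ) (col i)) := by
          rw [hAf_apply (x + y) i, lp.coeFn_add]
          rfl
        have h2 : ((Af x + Af y : lp (fun _ : ℕ => ℂ) 2) : ∀ _ : ℕ, ℂ) i
            = (Af x : ∀ _ : ℕ, ℂ) i + (Af y : ∀ _ : ℕ, ℂ) i := by
          rw [lp.coeFn_add]
          rfl
        rw [h1, h2, hAf_apply, hAf_apply]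
        ring
      map_smul' := by
        intro a x
        ext i
        have h1 : (Af (a • x) : ∀ _ : ℕ, ℂ) i
            = ((Real.sqrt (c i) : ℝ) : ℂ) * (a * (x : ∀ _ : ℕ, ℂ) (col i)) := by
          rw [hAf_apply (a • x) i, lp.coeFn_smul]
          rfl
        have h2 : ((a • Af x : lp (fun _ : ℕ => ℂ) 2) : ∀ _ : ℕ, ℂ) i
            = a * (Af x : ∀ _ : ℕ, ℂ) i := by
          rw [lp.coeFn_smul]
          rfl
        simp only [RingHom.id_apply]
        rw [h2, hAf_apply]
        exact h1.trans (by ring) } with hU0_def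
  set U : lp (fun _ : ℕ => ℂ) 2 →ₗᵢ[ℂ] lp (fun _ : ℕ => ℂ) 2 := ⟨U0, hnorm⟩ with hU_def
  have hval : ∀ (j i : ℕ), ‖(U (lp.single 2 j 1) : ∀ _ : ℕ, ℂ) i‖ ^ 2
      = if col i = j then c i else 0 := by
    intro j i
    have hU0a : (U (lp.single 2 j 1) : ∀ _ : ℕ, ℂ) i
        = ((Real.sqrt (c i) : ℝ) : ℂ) * ((lp.single 2 j (1:ℂ) : ∀ _ : ℕ, ℂ) (col i)) := rfl
    rw [hU0a]
    by_cases h : col i = j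
    · rw [if_pos h, h, lp.single_apply_self, mul_one, Complex.norm_real, Real.norm_eq_abs,
        abs_of_nonneg (Real.sqrt_nonneg _), Real.sq_sqrt (hc0 i)]
    · rw [if_neg h, lp.single_apply_ne 2 j _ h, mul_zero, norm_zero]
      norm_num
  refine ⟨U, fun N => ⟨?_, ?_⟩⟩
  · refine Real.iSup_le (fun i => Real.iSup_le (fun j => ?_) (hf0 N).le) (hf0 N).le
    rw [hval j (i : ℕ)]
    by_cases h : col (i : ℕ) = j
    · rw [if_pos h]
      calc c (i : ℕ) ≤ min (f (i : ℕ)) (g (col (i : ℕ))) := hcle _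
        _ ≤ f (i : ℕ) := min_le_left _ _
        _ ≤ f N := hfdec i.2
    · rw [if_neg h]; exact (hf0 N).le
  · refine Real.iSup_le (fun i => Real.iSup_le (fun j => ?_) (hg0 N).le) (hg0 N).le
    rw [hval (j : ℕ) i]
    by_cases h : col i = (j : ℕ)
    · rw [if_pos h]
      calc c i ≤ min (f i) (g (col i)) := hcle _
        _ ≤ g (col i) := min_le_right _ _
        _ = g (j : ℕ) := by rw [h]
        _ ≤ g N := hgdec j.2
    · rw [if_neg h]; exact (hg0 N).le
end

section
/- Let D ⊂ ℝ^d be a bounded set containing 0 in its interior, and define S_D(x) = inf{κ > 0 : x ∈ κD} for x ∈ ℤ^d. If σ: ℕ → ℤ^d is a bijection consistent with S_D, then there exist constants E₁, E₂ > 0 such that E₁·N^{1/d} ≤ max(‖σ(N)‖_∞, 1) ≤ E₂·N^{1/d} for all N ∈ ℕ. -/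
open Pointwise

@[reducible] private def vnn {d : ℕ} (x : Fin d → ℤ) : ℕ := Finset.univ.sup fun i => (x i).natAbs

private lemma box_card (d m : ℕ) :
    (Fintype.piFinset (fun _ : Fin d => Finset.Icc (-(m:ℤ)) (m:ℤ))).card = (2*m+1)^d := by
  rw [Fintype.card_piFinset]
  have h : (Finset.Icc (-(m:ℤ)) (m:ℤ)).card = 2*m+1 := by
    rw [Int.card_Icc]; omega
  simp [h]

private lemma mem_box {d m : ℕ} (x : Fin d → ℤ) :
    x ∈ Fintype.piFinset (fun _ : Fin d => Finset.Icc (-(m:ℤ)) (m:ℤ)) ↔ vnn x ≤ m := by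
  rw [Fintype.mem_piFinset]
  simp only [Finset.mem_Icc]
  rw [vnn, Finset.sup_le_iff]
  constructor
  · intro h i _; have := h i; omega
  · intro h i; have := h i (Finset.mem_univ i); omega

/-- If `D ⊂ ℝ^d` is bounded with `0` in its interior, `S_D(x) = inf{κ > 0 : x ∈ κD}`, and
`σ : ℕ → ℤ^d` is a bijection consistent with `S_D`, then `max(‖σ(N)‖_∞,1) ≍ N^{1/d}`. -/
theorem stmt15 (d : ℕ) (hd : 1 ≤ d) (D : Set (Fin d → ℝ))
    (hbdd : Bornology.IsBounded D) (h0 : (0 : Fin d → ℝ) ∈ interior D)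
    (S : (Fin d → ℤ) → ℝ)
    (hS : ∀ x : Fin d → ℤ, S x = sInf {κ : ℝ | 0 < κ ∧ (fun i => (x i : ℝ)) ∈ κ • D})
    (σ : ℕ+ → (Fin d → ℤ)) (hbij : Function.Bijective σ)
    (hcons : ∀ a b : ℕ+, S (σ a) < S (σ b) → a < b) :
    ∃ E₁ > (0 : ℝ), ∃ E₂ > (0 : ℝ), ∀ N : ℕ+,
      E₁ * ((N : ℕ) : ℝ) ^ ((d : ℝ)⁻¹) ≤ ((max (Finset.univ.sup fun i => (σ N i).natAbs) 1 : ℕ) : ℝ) ∧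
      ((max (Finset.univ.sup fun i => (σ N i).natAbs) 1 : ℕ) : ℝ) ≤ E₂ * ((N : ℕ) : ℝ) ^ ((d : ℝ)⁻¹) := by
  haveI : Nonempty (Fin d) := ⟨⟨0, by omega⟩⟩
  have hdne : (d:ℝ) ≠ 0 := Nat.cast_ne_zero.mpr (by omega)
  obtain ⟨R₀, hR₀⟩ := hbdd.exists_norm_le
  set R : ℝ := max R₀ 1 with hRdef
  have hR1 : (1:ℝ) ≤ R := le_max_right _ _
  have hR0 : (0:ℝ) < R := lt_of_lt_of_le one_pos hR1
  have hRD : ∀ y ∈ D, ‖y‖ ≤ R := fun y hy => (hR₀ y hy).trans (le_max_left _ _)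
  obtain ⟨r, hr0, hrD⟩ : ∃ r > 0, Metric.ball (0:Fin d → ℝ) r ⊆ D :=
    Metric.mem_nhds_iff.mp (mem_interior_iff_mem_nhds.mp h0)
  -- norm of integer vector
  have hnorm : ∀ x : Fin d → ℤ, ‖(fun i => (x i : ℝ))‖ = (vnn x : ℝ) := by
    intro x
    apply le_antisymm
    · apply (pi_norm_le_iff_of_nonneg (by positivity)).mpr
      intro i
      have h2 : (x i).natAbs ≤ vnn x :=
        Finset.le_sup (f := fun j => (x j).natAbs) (Finset.mem_univ i)
      rw [Real.norm_eq_abs, ← Int.cast_abs]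
      calc ((|x i| : ℤ) : ℝ) = ((x i).natAbs : ℝ) := by
            rw [Nat.cast_natAbs, Int.cast_abs]
        _ ≤ (vnn x : ℝ) := by exact_mod_cast h2
    · obtain ⟨i, hi⟩ := Finset.exists_mem_eq_sup Finset.univ Finset.univ_nonempty
        (fun i => (x i).natAbs)
      have h2 : vnn x = (x i).natAbs := hi.2
      rw [h2, Nat.cast_natAbs, Int.cast_abs, ← Real.norm_eq_abs]
      exact norm_le_pi_norm (fun j => ((x j : ℤ) : ℝ)) i
  -- membership criteria
  have hmem : ∀ (x : Fin d → ℤ) (κ : ℝ), 0 < κ → (vnn x : ℝ) < κ * r →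
      (fun i => (x i:ℝ)) ∈ κ • D := by
    intro x κ hκ h
    rw [Set.mem_smul_set_iff_inv_smul_mem₀ (ne_of_gt hκ)]
    apply hrD
    rw [Metric.mem_ball, dist_zero_right, norm_smul, hnorm, norm_inv, Real.norm_eq_abs,
      abs_of_pos hκ]
    calc κ⁻¹ * (vnn x : ℝ) < κ⁻¹ * (κ * r) := by
          exact mul_lt_mul_of_pos_left h (inv_pos.mpr hκ)
      _ = r := by field_simp
  have hrev : ∀ (x : Fin d → ℤ) (κ : ℝ), 0 < κ → (fun i => (x i:ℝ)) ∈ κ • D →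
      (vnn x : ℝ) ≤ κ * R := by
    intro x κ hκ hx
    rw [Set.mem_smul_set_iff_inv_smul_mem₀ (ne_of_gt hκ)] at hx
    have h1 := hRD _ hx
    rw [norm_smul, norm_inv, Real.norm_eq_abs, abs_of_pos hκ, hnorm] at h1
    calc (vnn x : ℝ) = κ * (κ⁻¹ * (vnn x : ℝ)) := by field_simp
      _ ≤ κ * R := mul_le_mul_of_nonneg_left h1 hκ.le
  have hne : ∀ x : Fin d → ℤ, {κ : ℝ | 0 < κ ∧ (fun i => (x i : ℝ)) ∈ κ • D}.Nonempty := by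
    intro x
    refine ⟨(vnn x : ℝ) / r + 1, by positivity, hmem x _ (by positivity) ?_⟩
    have : ((vnn x : ℝ) / r + 1) * r = (vnn x : ℝ) + r := by field_simp
    rw [this]; linarith
  have hbdd' : ∀ x : Fin d → ℤ, BddBelow {κ : ℝ | 0 < κ ∧ (fun i => (x i : ℝ)) ∈ κ • D} :=
    fun x => ⟨0, fun κ hκ => hκ.1.le⟩
  have hS0 : ∀ x, 0 ≤ S x := by
    intro x; rw [hS]; exact le_csInf (hne x) (fun κ hκ => hκ.1.le)
  have hSle : ∀ x : Fin d → ℤ, S x ≤ (vnn x : ℝ) / r := by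
    intro x
    apply le_of_forall_gt_imp_ge_of_dense
    intro κ hκ
    have hκ0 : 0 < κ := lt_of_le_of_lt (by positivity) hκ
    rw [hS]
    apply csInf_le (hbdd' x)
    refine ⟨hκ0, hmem x κ hκ0 ?_⟩
    rw [div_lt_iff₀ hr0] at hκ
    exact hκ
  have hSge : ∀ x : Fin d → ℤ, (vnn x : ℝ) ≤ R * S x := by
    intro x
    have h1 : (vnn x : ℝ) / R ≤ S x := by
      rw [hS]
      apply le_csInf (hne x)
      intro κ hκ
      have := hrev x κ hκ.1 hκ.2
      rw [div_le_iff₀ hR0]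
      linarith [this]
    rw [div_le_iff₀ hR0] at h1
    linarith
  have hmono : ∀ a b : ℕ+, a ≤ b → S (σ a) ≤ S (σ b) := by
    intro a b hab
    by_contra h
    push_neg at h
    exact absurd (hcons b a h) (not_lt.mpr hab)
  set e := Equiv.ofBijective σ hbij with he
  refine ⟨(2*R/r+1)⁻¹, by positivity, R/r+1, by positivity, fun N => ?_⟩
  have hMeq : (max (Finset.univ.sup fun i => (σ N i).natAbs) 1 : ℕ) = max (vnn (σ N)) 1 := rfl
  rw [hMeq]
  set t := S (σ N) with ht
  set M : ℕ := max (vnn (σ N)) 1 with hM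
  have hM1 : 1 ≤ M := le_max_right _ _
  have hMr : (1:ℝ) ≤ (M:ℝ) := by exact_mod_cast hM1
  have hnnM : (vnn (σ N) : ℝ) ≤ (M:ℝ) := by
    have : vnn (σ N) ≤ M := le_max_left _ _
    exact_mod_cast this
  have hN1 : (1:ℝ) ≤ ((N:ℕ):ℝ) := by exact_mod_cast N.one_le
  have hX1 : (1:ℝ) ≤ ((N:ℕ):ℝ) ^ ((d:ℝ)⁻¹) := by
    calc (1:ℝ) = 1 ^ ((d:ℝ)⁻¹) := (Real.one_rpow _).symm
      _ ≤ _ := Real.rpow_le_rpow zero_le_one hN1 (by positivity)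
  have hXpos : (0:ℝ) < ((N:ℕ):ℝ) ^ ((d:ℝ)⁻¹) := lt_of_lt_of_le one_pos hX1
  have ht0 : 0 ≤ t := hS0 _
  constructor
  · -- lower bound
    set m₁ : ℕ := ⌊R * t⌋₊ with hm₁
    have h1 : ∀ a : ℕ+, a ≤ N → σ a ∈ Fintype.piFinset
        (fun _ : Fin d => Finset.Icc (-(m₁:ℤ)) (m₁:ℤ)) := by
      intro a ha
      rw [mem_box]
      apply Nat.le_floor
      calc (vnn (σ a) : ℝ) ≤ R * S (σ a) := hSge _
        _ ≤ R * t := by have := hmono a N ha; nlinarith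
    have hcard : (N:ℕ) ≤ (2*m₁+1)^d := by
      rw [← box_card d m₁]
      have := Finset.card_le_card_of_injOn
        (f := fun k : ℕ => σ ⟨k+1, k.succ_pos⟩)
        (s := Finset.range (N:ℕ))
        (t := Fintype.piFinset (fun _ : Fin d => Finset.Icc (-(m₁:ℤ)) (m₁:ℤ)))
        (by
          intro k hk
          rw [Finset.mem_coe, Finset.mem_range] at hk
          exact h1 _ ((PNat.coe_le_coe _ _).mp (by show k + 1 ≤ (N:ℕ); omega)))
        (by
          intro a _ b _ hab
          have h2 : a + 1 = b + 1 := Subtype.mk_eq_mk.mp (hbij.1 hab)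
          omega)
      simpa using this
    -- convert to real
    have hm₁r : (m₁:ℝ) ≤ R * t := Nat.floor_le (by positivity)
    have htM : t ≤ (M:ℝ) / r := by
      have := hSle (σ N)
      rw [← ht] at this
      calc t ≤ (vnn (σ N) : ℝ) / r := this
        _ ≤ (M:ℝ) / r := by gcongr
    have hchain : (2*(m₁:ℝ)+1) ≤ (2*R/r+1) * (M:ℝ) := by
      have h2 : (m₁:ℝ) ≤ R * ((M:ℝ)/r) := by nlinarith
      have h4 : (2*R/r+1) * (M:ℝ) = 2*(R*((M:ℝ)/r)) + (M:ℝ) := by ring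
      rw [h4]
      linarith
    have hreal : ((N:ℕ):ℝ) ≤ ((2*R/r+1) * (M:ℝ))^d := by
      calc ((N:ℕ):ℝ) ≤ ((2*m₁+1:ℕ):ℝ)^d := by exact_mod_cast hcard
        _ ≤ ((2*R/r+1) * (M:ℝ))^d := by
            apply pow_le_pow_left₀ (by positivity)
            push_cast
            exact hchain
    have hroot : ((N:ℕ):ℝ) ^ ((d:ℝ)⁻¹) ≤ (2*R/r+1) * (M:ℝ) := by
      have := Real.rpow_le_rpow (by positivity) hreal (by positivity : (0:ℝ) ≤ (d:ℝ)⁻¹)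
      rwa [← Real.rpow_natCast ((2*R/r+1) * (M:ℝ)) d, ← Real.rpow_mul (by positivity),
        mul_inv_cancel₀ hdne, Real.rpow_one] at this
    calc (2*R/r+1)⁻¹ * ((N:ℕ):ℝ) ^ ((d:ℝ)⁻¹)
        ≤ (2*R/r+1)⁻¹ * ((2*R/r+1) * (M:ℝ)) :=
          mul_le_mul_of_nonneg_left hroot (by positivity)
      _ = (M:ℝ) := by field_simp
  · -- upper bound
    have htr : t * r ≤ ((N:ℕ):ℝ) ^ ((d:ℝ)⁻¹) := by
      rcases eq_or_lt_of_le ht0 with h0' | htpos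
      · rw [← h0', zero_mul]; positivity
      · have htrpos : 0 < t * r := mul_pos htpos hr0
        set m₂ : ℕ := ⌈t*r⌉₊ - 1 with hm₂
        have hc1 : 1 ≤ ⌈t*r⌉₊ := Nat.one_le_ceil_iff.mpr htrpos
        have hm₂1 : (m₂:ℕ) + 1 = ⌈t*r⌉₊ := by omega
        have hm₂lt : (m₂:ℝ) < t*r := by
          have h2 : (⌈t*r⌉₊:ℝ) < t*r + 1 := Nat.ceil_lt_add_one htrpos.le
          have h3 : (m₂:ℝ) + 1 = (⌈t*r⌉₊:ℝ) := by exact_mod_cast hm₂1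
          linarith
        have hm₂ge : t*r ≤ (m₂:ℝ) + 1 := by
          have := Nat.le_ceil (t*r)
          rw [← hm₂1] at this
          exact_mod_cast this
        have hsx : ∀ x : Fin d → ℤ, x ∈ Fintype.piFinset
            (fun _ : Fin d => Finset.Icc (-(m₂:ℤ)) (m₂:ℤ)) → S x < t := by
          intro x hx
          rw [mem_box] at hx
          calc S x ≤ (vnn x : ℝ) / r := hSle x
            _ ≤ (m₂:ℝ) / r := by
                have h8 : (vnn x:ℝ) ≤ (m₂:ℝ) := by exact_mod_cast hx
                gcongr
            _ < t := by rw [div_lt_iff₀ hr0]; exact hm₂lt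
        have hcard : (2*m₂+1)^d ≤ (N:ℕ) - 1 := by
          rw [← box_card d m₂]
          have := Finset.card_le_card_of_injOn
            (f := fun x : Fin d → ℤ => ((e.symm x : ℕ+) : ℕ))
            (s := Fintype.piFinset (fun _ : Fin d => Finset.Icc (-(m₂:ℤ)) (m₂:ℤ)))
            (t := Finset.Ico 1 (N:ℕ))
            (by
              intro x hx
              rw [Finset.mem_coe, Finset.mem_Ico]
              have hlt : e.symm x < N := by
                apply hcons
                have h9 : σ (e.symm x) = x := e.apply_symm_apply x
                rw [h9]
                exact hsx x hx
              exact ⟨(e.symm x).one_le, by exact_mod_cast hlt⟩)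
            (by
              intro a _ b _ hab
              exact e.symm.injective (PNat.coe_injective hab))
          simpa [Nat.card_Ico] using this
        have hcard' : (2*m₂+1)^d ≤ (N:ℕ) := le_trans hcard (Nat.sub_le _ _)
        have hreal : (t*r)^d ≤ ((N:ℕ):ℝ) := by
          calc (t*r)^d ≤ ((m₂:ℝ)+1)^d := pow_le_pow_left₀ htrpos.le hm₂ge d
            _ ≤ ((2*m₂+1:ℕ):ℝ)^d := by
                apply pow_le_pow_left₀ (by positivity)
                push_cast; linarith [Nat.cast_nonneg (α := ℝ) m₂]
            _ ≤ ((N:ℕ):ℝ) := by exact_mod_cast hcard'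
        have := Real.rpow_le_rpow (by positivity) hreal (by positivity : (0:ℝ) ≤ (d:ℝ)⁻¹)
        rwa [← Real.rpow_natCast (t*r) d, ← Real.rpow_mul htrpos.le,
          mul_inv_cancel₀ hdne, Real.rpow_one] at this
    -- conclude
    have hnnt : (vnn (σ N) : ℝ) ≤ R * t := hSge _
    have htX : t ≤ ((N:ℕ):ℝ) ^ ((d:ℝ)⁻¹) / r := by
      rw [le_div_iff₀ hr0]; exact htr
    have hMcast : ((M:ℕ):ℝ) = max ((vnn (σ N):ℕ):ℝ) 1 := by
      rw [hM]; push_cast; rfl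
    rw [hMcast]
    apply max_le
    · calc ((vnn (σ N):ℕ):ℝ) ≤ R * t := hnnt
        _ ≤ R * (((N:ℕ):ℝ) ^ ((d:ℝ)⁻¹) / r) := mul_le_mul_of_nonneg_left htX hR0.le
        _ = R/r * ((N:ℕ):ℝ) ^ ((d:ℝ)⁻¹) := by ring
        _ ≤ (R/r+1) * ((N:ℕ):ℝ) ^ ((d:ℝ)⁻¹) :=
            mul_le_mul_of_nonneg_right (by linarith) hXpos.le
    · calc (1:ℝ) ≤ ((N:ℕ):ℝ) ^ ((d:ℝ)⁻¹) := hX1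
        _ = 1 * ((N:ℕ):ℝ) ^ ((d:ℝ)⁻¹) := (one_mul _).symm
        _ ≤ (R/r+1) * ((N:ℕ):ℝ) ^ ((d:ℝ)⁻¹) :=
            mul_le_mul_of_nonneg_right (by have := div_pos hR0 hr0; linarith) hXpos.le
end

section
/- For each N ∈ ℕ let j(N) be a nondecreasing unbounded sequence of integers ≥ J such that T_d(j(N)−1) ≤ N ≤ T_d(j(N)), where T_d(x) = p_d(x)·2^x + α_d for some polynomial p_d of degree d−1 with positive leading coefficient and some constant α_d. Then there exist constants D₁, D₂ > 0 such that D₁·h_d(N) ≤ 2^{j(N)} ≤ D₂·h_d(N) for all sufficiently large N, where h_d(x) = x/log^{d−1}(x+1). -/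
open Filter Real Asymptotics

private lemma int_le_two_zpow (n : ℤ) : (n : ℝ) ≤ (2:ℝ) ^ n := by
  rcases le_or_gt n 0 with h | h
  · calc (n:ℝ) ≤ 0 := by exact_mod_cast h
      _ ≤ (2:ℝ) ^ n := (zpow_pos (by norm_num) n).le
  · have hn : n = (n.toNat : ℤ) := (Int.toNat_of_nonneg h.le).symm
    rw [hn, zpow_natCast]
    calc ((n.toNat : ℤ) : ℝ) = (n.toNat : ℝ) := by push_cast; ring
      _ ≤ (2:ℝ) ^ n.toNat := by exact_mod_cast (Nat.lt_two_pow_self (n := n.toNat)).le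

set_option maxHeartbeats 2000000 in
/-- If `j(N)` is nondecreasing, unbounded, `≥ J`, and sandwiched via
`T_d(j(N)−1) ≤ N ≤ T_d(j(N))` where `T_d(x) = p_d(x)·2^x + α_d` with `p_d` of degree `d−1`
and positive leading coefficient, then `2^{j(N)} ≍ h_d(N) = N / log^{d−1}(N+1)` eventually. -/
theorem stmt19 (d : ℕ) (hd : 1 ≤ d) (J : ℕ) (j : ℕ → ℤ)
    (hmono : Monotone j) (hunb : Filter.Tendsto j Filter.atTop Filter.atTop)
    (hJ : ∀ N, (J : ℤ) ≤ j N)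
    (p : Polynomial ℝ) (hdeg : p.natDegree = d - 1) (hlead : 0 < p.leadingCoeff) (α : ℝ)
    (hT : ∀ N : ℕ, 1 ≤ N →
      p.eval ((j N : ℝ) - 1) * (2 : ℝ) ^ (j N - 1) + α ≤ (N : ℝ) ∧
      (N : ℝ) ≤ p.eval (j N : ℝ) * (2 : ℝ) ^ (j N) + α) :
    ∃ D₁ > (0 : ℝ), ∃ D₂ > (0 : ℝ), ∃ N₀ : ℕ, ∀ N : ℕ, N₀ ≤ N →
      D₁ * ((N : ℝ) / Real.log ((N : ℝ) + 1) ^ (d - 1)) ≤ (2 : ℝ) ^ (j N) ∧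
      (2 : ℝ) ^ (j N) ≤ D₂ * ((N : ℝ) / Real.log ((N : ℝ) + 1) ^ (d - 1)) := by
  set c := p.leadingCoeff with hc
  set e := d - 1 with he
  -- basic tendsto facts
  have htm : Tendsto (fun N => (j N : ℝ)) atTop atTop :=
    (tendsto_intCast_atTop_atTop).comp hunb
  have htm1 : Tendsto (fun N => (j N : ℝ) - 1) atTop atTop :=
    tendsto_atTop_add_const_right _ (-1) htm
  have htwo : Tendsto (fun N => (2:ℝ) ^ (j N)) atTop atTop :=
    tendsto_atTop_mono (fun N => int_le_two_zpow (j N)) htm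
  -- polynomial bounds: eventually (c/2) x^e ≤ p.eval x ≤ (3c/2) x^e
  have hpoly : ∀ᶠ x : ℝ in atTop,
      c / 2 * x ^ e ≤ p.eval x ∧ p.eval x ≤ 3 * c / 2 * x ^ e := by
    have h := p.isEquivalent_atTop_lead
    rw [hdeg] at h
    have h2 := h.isLittleO.def (by norm_num : (0:ℝ) < 1/2)
    filter_upwards [h2, eventually_ge_atTop (0:ℝ)] with x hx hx0
    rw [Real.norm_eq_abs, Real.norm_eq_abs, Pi.sub_apply] at hx
    have hcx : |c * x ^ e| = c * x ^ e := by
      rw [abs_of_nonneg (by positivity)]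
    rw [hcx] at hx
    have := abs_le.1 hx
    constructor <;> nlinarith [this.1, this.2]
  -- various eventual facts in N
  have HK : ∀ K : ℝ, ∀ᶠ N in atTop, K ≤ ((j N : ℝ)) ^ e * (2:ℝ) ^ (j N) := by
    intro K
    filter_upwards [htwo.eventually_ge_atTop K, htm.eventually_ge_atTop 1] with N h1 h2
    have hp : (0:ℝ) < (2:ℝ) ^ (j N) := zpow_pos (by norm_num) _
    have : (1:ℝ) ≤ ((j N : ℝ)) ^ e := one_le_pow₀ h2
    nlinarith
  -- log little-o facts
  have hlog : ∀ᶠ x : ℝ in atTop, (e:ℝ) * Real.log x + Real.log (3*c) ≤ 0.3 * x := by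
    have h1 : (fun x : ℝ => (e:ℝ) * Real.log x) =o[atTop] (fun x : ℝ => x) :=
      (Real.isLittleO_log_id_atTop).const_mul_left _
    filter_upwards [h1.def (by norm_num : (0:ℝ) < 0.15),
      eventually_ge_atTop (1:ℝ),
      eventually_ge_atTop (Real.log (3*c) / 0.15)] with x hx hx1 hx2
    rw [Real.norm_eq_abs, Real.norm_eq_abs] at hx
    have hlx : 0 ≤ Real.log x := Real.log_nonneg hx1
    have h3 : (e:ℝ) * Real.log x ≤ 0.15 * x := by
      calc (e:ℝ) * Real.log x ≤ |(e:ℝ) * Real.log x| := le_abs_self _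
        _ ≤ 0.15 * |x| := hx
        _ = 0.15 * x := by rw [abs_of_nonneg (by linarith)]
    have h4 : Real.log (3*c) ≤ 0.15 * x := by
      rw [div_le_iff₀ (by norm_num : (0:ℝ) < 0.15)] at hx2
      linarith
    linarith

  -- the big eventual statement
  have main : ∀ᶠ N : ℕ in atTop,
      (1/(2*c*2^e)) * ((N : ℝ) / Real.log ((N : ℝ) + 1) ^ e) ≤ (2 : ℝ) ^ (j N) ∧
      (2 : ℝ) ^ (j N) ≤ (2^(e+3)/c) * ((N : ℝ) / Real.log ((N : ℝ) + 1) ^ e) := by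
    have hA : (0:ℝ) < c / 2^(e+3) := by positivity
    filter_upwards [eventually_ge_atTop 1,
      htm1.eventually hpoly, htm.eventually hpoly,
      htm.eventually_ge_atTop 2,
      HK (-α * 2^(e+3) / c), HK (2*α/c), HK (1/c),
      htm.eventually hlog,
      htm.eventually_ge_atTop (-Real.log (c / 2^(e+3)) / (Real.log 2 - 1/2))]
      with N hN1 hp1 hp2 hm2 h5 h6 h7 h8 h9
    set m := (j N : ℝ) with hm
    set P := (2:ℝ) ^ (j N) with hP
    set M := m ^ e with hM
    have hPpos : (0:ℝ) < P := zpow_pos (by norm_num) _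
    have hmpos : (0:ℝ) < m := by linarith
    have hMpos : (0:ℝ) < M := by positivity
    have hM1 : (1:ℝ) ≤ M := one_le_pow₀ (by linarith)
    obtain ⟨hTl, hTu⟩ := hT N hN1
    have hNnn : (0:ℝ) ≤ (N:ℝ) := Nat.cast_nonneg N
    -- upper bound on N
    have halpha : α ≤ c/2 * M * P := by
      have := h6
      have h2 : c * (2*α/c) ≤ c * (M * P) := by
        apply mul_le_mul_of_nonneg_left _ hlead.le
        linarith
      rw [mul_div_cancel₀ _ (ne_of_gt hlead)] at h2
      linarith
    have hNu : (N:ℝ) ≤ 2*c*M*P := by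
      have h1 : p.eval m * P ≤ 3*c/2 * M * P := by
        apply mul_le_mul_of_nonneg_right hp2.2 hPpos.le
      nlinarith [hTu]
    -- lower bound on N
    have hNl : c/2^(e+3) * M * P ≤ (N:ℝ) := by
      have hhalf : m/2 ≤ m - 1 := by linarith
      have hpow2 : (m/2)^e ≤ (m-1)^e := pow_le_pow_left₀ (by linarith) hhalf e
      have hzs : (2:ℝ) ^ (j N - 1) = P / 2 := by
        rw [zpow_sub_one₀ (two_ne_zero) (j N)]
        ring
      have h1 : c/2 * (m/2)^e ≤ p.eval (m - 1) := by
        calc c/2 * (m/2)^e ≤ c/2 * (m-1)^e := by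
              apply mul_le_mul_of_nonneg_left hpow2 (by positivity)
          _ ≤ p.eval (m - 1) := hp1.1
      have h2 : c/2 * (m/2)^e * (P/2) ≤ p.eval (m - 1) * (2:ℝ) ^ (j N - 1) := by
        rw [hzs]
        apply mul_le_mul_of_nonneg_right h1 (by positivity)
      have h3 : c/2 * (m/2)^e * (P/2) = c/2^(e+2) * M * P := by
        rw [div_pow, hM]
        rw [pow_add]
        field_simp
      have h4 : -α ≤ c/2^(e+3) * M * P := by
        have h2' : c * (-α * 2^(e+3) / c) ≤ c * (M * P) := by
          apply mul_le_mul_of_nonneg_left _ hlead.le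
          linarith
        rw [mul_div_cancel₀ _ (ne_of_gt hlead)] at h2'
        have hpw : (0:ℝ) < (2:ℝ)^(e+3) := by positivity
        rw [div_mul_eq_mul_div, div_mul_eq_mul_div, le_div_iff₀ hpw, mul_assoc]
        exact h2'
      have h5' : c/2^(e+2) * M * P = 2 * (c/2^(e+3) * M * P) := by
        rw [pow_succ]
        ring
      linarith [hTl, h2]
    -- log bounds
    set L := Real.log ((N:ℝ) + 1) with hL
    have hlog2lt : Real.log 2 < 0.7 := by
      linarith [Real.log_two_lt_d9]
    have hlog2gt : (1/2 : ℝ) < Real.log 2 := by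
      linarith [Real.log_two_gt_d9]
    have hLu : L ≤ m := by
      have hc1 : (1:ℝ) ≤ c * (M * P) := by
        have h2' : c * (1/c) ≤ c * (M * P) := by
          apply mul_le_mul_of_nonneg_left _ hlead.le
          linarith
        rw [mul_one_div, div_self (ne_of_gt hlead)] at h2'
        linarith
      have hN3 : (N:ℝ) + 1 ≤ 3*c * (M * P) := by
        have hr : 2*c*M*P = 2*(c*(M*P)) := by ring
        have hr2 : 3*c*(M*P) = 3*(c*(M*P)) := by ring
        linarith
      have hlog3 : Real.log ((N:ℝ)+1) ≤ Real.log (3*c * (M*P)) :=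
        Real.log_le_log (by linarith) hN3
      have hexp : Real.log (3*c * (M*P)) = Real.log (3*c) + (e:ℝ) * Real.log m
          + (j N : ℝ) * Real.log 2 := by
        rw [Real.log_mul (by positivity) (by positivity),
            Real.log_mul (ne_of_gt hMpos) (ne_of_gt hPpos),
            hM, Real.log_pow, hP, Real.log_zpow]
        push_cast
        ring
      rw [hexp] at hlog3
      show Real.log ((N:ℝ) + 1) ≤ m
      have hml : m * Real.log 2 ≤ 0.7 * m := by
        have h' := mul_le_mul_of_nonneg_left hlog2lt.le hmpos.le
        linarith
      have hjm : (j N : ℝ) * Real.log 2 = m * Real.log 2 := by rw [hm]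
      linarith [h8, hlog3]
    have hLl : m/2 ≤ L := by
      have hNP : c/2^(e+3) * P ≤ (N:ℝ) := by
        have h' : c/2^(e+3) * 1 * P ≤ c/2^(e+3) * M * P :=
          mul_le_mul_of_nonneg_right (mul_le_mul_of_nonneg_left hM1 hA.le) hPpos.le
        rw [mul_one] at h'
        linarith
      have h1 : Real.log (c/2^(e+3) * P) ≤ L := by
        apply Real.log_le_log (by positivity)
        linarith
      have h2 : Real.log (c/2^(e+3) * P) = Real.log (c/2^(e+3)) + (j N : ℝ) * Real.log 2 := by
        rw [Real.log_mul (ne_of_gt hA) (ne_of_gt hPpos), hP, Real.log_zpow]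
      have h3 : -Real.log (c/2^(e+3)) ≤ (Real.log 2 - 1/2) * m := by
        rw [div_le_iff₀ (by linarith : (0:ℝ) < Real.log 2 - 1/2)] at h9
        linarith [h9]
      rw [h2, ← hm] at h1
      linarith [h1, h3]
    have hLpos : (0:ℝ) < L := by linarith
    -- final bounds
    constructor
    · -- lower
      have hLe : M/2^e ≤ L^e := by
        have : (m/2)^e ≤ L^e := pow_le_pow_left₀ (by positivity) hLl e
        rw [div_pow] at this
        exact this
      have hd1 : (N:ℝ) / L^e ≤ (N:ℝ) / (M/2^e) :=
        div_le_div_of_nonneg_left hNnn (by positivity) hLe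
      have hd2 : (N:ℝ) / (M/2^e) ≤ 2*c*2^e * P := by
        rw [div_le_iff₀ (by positivity : (0:ℝ) < M/2^e)]
        calc (N:ℝ) ≤ 2*c*M*P := hNu
          _ = 2*c*2^e*P * (M/2^e) := by field_simp
      have hcpos : (0:ℝ) < 2*c*2^e := by positivity
      rw [one_div, inv_mul_le_iff₀ hcpos]
      calc (N:ℝ) / L^e ≤ 2*c*2^e * P := le_trans hd1 hd2
        _ = 2*c*2^e * P := rfl
    · -- upper
      have hLe : L^e ≤ M := by
        rw [hM]
        exact pow_le_pow_left₀ hLpos.le hLu e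
      have hd1 : (N:ℝ) / M ≤ (N:ℝ) / L^e :=
        div_le_div_of_nonneg_left hNnn (by positivity) hLe
      have hd2 : c/2^(e+3) * P ≤ (N:ℝ) / M := by
        rw [le_div_iff₀ hMpos]
        nlinarith
      have h1 : c/2^(e+3) * P ≤ (N:ℝ) / L^e := le_trans hd2 hd1
      have h2 : (2:ℝ)^(e+3) * (c/2^(e+3) * P) ≤ (2:ℝ)^(e+3) * ((N:ℝ)/L^e) :=
        mul_le_mul_of_nonneg_left h1 (by positivity)
      have h3 : (2:ℝ)^(e+3) * (c/2^(e+3) * P) = P * c := by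
        field_simp
      rw [div_mul_eq_mul_div, le_div_iff₀ hlead]
      linarith [h2, h3]
  -- extract N₀
  refine ⟨1/(2*c*2^e), by positivity, 2^(e+3)/c, by positivity, ?_⟩
  obtain ⟨N₀, hN₀⟩ := eventually_atTop.1 main
  exact ⟨N₀, fun N hN => hN₀ N hN⟩
end
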